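/- arXiv:2008.08770 — 7 statements merged into one kernel-verified Lean document; each statement's English description precedes it below -/
import Mathlib

section
/- Let f : [0,∞) → ℝ be continuous with f(0) = 0, f strictly increasing, and suppose for each R > 0, u_R is a C² solution on [0,1] of u''(s) + (2/s)u'(s) = R² f(u(s)) with u'(0) = 0, u'(1) + βR(u(1) − σ̄) = 0, and 0 ≤ u_R ≤ σ̄ (β, σ̄ > 0 fixed). Then max_{s∈[0,1]} |u_R(s) − σ̄| ≤ (R/(3β)) f(σ̄) + R² f(σ̄) ∫_0^1 τ^{-2} ∫_0^τ l² dl dτ, and consequently u_R → σ̄ uniformly on [0,1] as R → 0⁺. -/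
/-!
Multiplying the equation by `s²` puts it in divergence form `(s² u')' = R² s² f(u)`. Since
`0 ≤ u ≤ σ̄` and `f` is increasing, the source is at most `R² f(σ̄)`, so comparing `s² u'` with
`R² f(σ̄) s³ / 3` gives `u'(s) ≤ R² f(σ̄) s / 3`. The Robin condition turns this into
`σ̄ - u(1) = u'(1) / (βR) ≤ R f(σ̄) / (3β)`, and integrating `u'` from `s` to `1` adds at most
`R² f(σ̄) / 6`, which is the double integral times `R² f(σ̄)`. Both terms vanish as `R → 0⁺`.
-/

open Set Filter Topology

lemma sub_le_sub_of_hasDerivAt_le {f g f' g' : ℝ → ℝ} {a b : ℝ} (hab : a ≤ b)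
    (hfc : ContinuousOn f (Icc a b)) (hgc : ContinuousOn g (Icc a b))
    (hf : ∀ x ∈ Ioo a b, HasDerivAt f (f' x) x) (hg : ∀ x ∈ Ioo a b, HasDerivAt g (g' x) x)
    (hle : ∀ x ∈ Ioo a b, f' x ≤ g' x) : f b - f a ≤ g b - g a := by
  have hmono : MonotoneOn (fun x => g x - f x) (Icc a b) := by
    refine monotoneOn_of_hasDerivWithinAt_nonneg (f' := fun x => g' x - f' x) (convex_Icc a b)
      (hgc.sub hfc) ?_ ?_
    all_goals rw [interior_Icc]
    · exact fun x hx => ((hg x hx).sub (hf x hx)).hasDerivWithinAt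
    · exact fun x hx => sub_nonneg.2 (hle x hx)
  have := hmono (left_mem_Icc.2 hab) (right_mem_Icc.2 hab) hab
  linarith

lemma integral_inv_sq_mul_integral_sq (b : ℝ) :
    ∫ τ in (0:ℝ)..b, 1 / τ ^ 2 * ∫ l in (0:ℝ)..τ, l ^ 2 = b ^ 2 / 6 := by
  have hinner : EqOn (fun τ : ℝ => 1 / τ ^ 2 * ∫ l in (0:ℝ)..τ, l ^ 2) (fun τ => τ / 3)
      (uIcc 0 b) := by
    intro τ _
    rcases eq_or_ne τ 0 with rfl | hτ
    · simp
    · simp only [integral_pow]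
      field_simp
      ring
  rw [intervalIntegral.integral_congr hinner, intervalIntegral.integral_div, integral_id]
  ring

section RadialProblem

variable {u u' u'' F : ℝ → ℝ} {M : ℝ}

lemma hasDerivAt_sq_mul_of_radial_ode {x : ℝ} (hx : x ≠ 0) (hu' : HasDerivAt u' (u'' x) x)
    (hode : u'' x + 2 / x * u' x = F x) :
    HasDerivAt (fun y => y ^ 2 * u' y) (x ^ 2 * F x) x := by
  refine ((hasDerivAt_pow 2 x).mul hu').congr_deriv ?_
  rw [← hode]
  field_simp
  ring

lemma deriv_le_of_radial_ode (hu' : ∀ s ∈ Icc (0:ℝ) 1, HasDerivAt u' (u'' s) s)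
    (hode : ∀ s ∈ Ioo (0:ℝ) 1, u'' s + 2 / s * u' s = F s)
    (hF : ∀ s ∈ Ioo (0:ℝ) 1, F s ≤ M) (h0 : u' 0 = 0) :
    ∀ s ∈ Icc (0:ℝ) 1, u' s ≤ M * s / 3 := by
  rintro s ⟨hs0, hs1⟩
  rcases hs0.eq_or_lt with rfl | hs
  · simp [h0]
  have hsub : Icc 0 s ⊆ Icc (0:ℝ) 1 := Icc_subset_Icc_right hs1
  have hflux : s ^ 2 * u' s - 0 ^ 2 * u' 0 ≤ M * s ^ 3 / 3 - M * 0 ^ 3 / 3 := by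
    refine sub_le_sub_of_hasDerivAt_le (f := fun y => y ^ 2 * u' y) (g := fun y => M * y ^ 3 / 3)
      (f' := fun x => x ^ 2 * F x) (g' := fun x => M * x ^ 2) hs0
      (continuousOn_pow 2 |>.mul fun x hx => (hu' x (hsub hx)).continuousAt.continuousWithinAt)
      (by fun_prop) (fun x hx => ?_) (fun x _ => ?_) (fun x hx => ?_)
    · have hx1 : x ∈ Ioo (0:ℝ) 1 := ⟨hx.1, hx.2.trans_le hs1⟩
      exact hasDerivAt_sq_mul_of_radial_ode hx1.1.ne' (hu' x (Ioo_subset_Icc_self hx1))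
        (hode x hx1)
    · exact (((hasDerivAt_pow 3 x).const_mul M).div_const 3).congr_deriv (by ring)
    · rw [mul_comm M]
      exact mul_le_mul_of_nonneg_left (hF x ⟨hx.1, hx.2.trans_le hs1⟩) (sq_nonneg x)
  have : s ^ 2 * u' s ≤ s ^ 2 * (M * s / 3) := by linarith
  exact le_of_mul_le_mul_left this (by positivity)

lemma sub_le_of_deriv_le_of_robin {β R σ : ℝ} (hM : 0 ≤ M) (hβR : 0 < β * R)
    (hu : ∀ s ∈ Icc (0:ℝ) 1, HasDerivAt u (u' s) s)
    (hu'le : ∀ s ∈ Icc (0:ℝ) 1, u' s ≤ M * s / 3) (hbc : u' 1 + β * R * (u 1 - σ) = 0) :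
    ∀ s ∈ Icc (0:ℝ) 1, σ - u s ≤ M / (3 * (β * R)) + M / 6 := by
  rintro s ⟨hs0, hs1⟩
  have hboundary : σ - u 1 ≤ M / (3 * (β * R)) := by
    rw [le_div_iff₀ (by positivity)]
    have hflux := hu'le 1 (right_mem_Icc.2 zero_le_one)
    linear_combination (-3) * hbc + 3 * hflux
  have hinterior : u 1 - u s ≤ M * 1 ^ 2 / 6 - M * s ^ 2 / 6 := by
    have hsub : Icc s 1 ⊆ Icc (0:ℝ) 1 := Icc_subset_Icc_left hs0
    refine sub_le_sub_of_hasDerivAt_le (g := fun y => M * y ^ 2 / 6) (g' := fun x => M * x / 3)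
      hs1 (fun x hx => (hu x (hsub hx)).continuousAt.continuousWithinAt) (by fun_prop)
      (fun x hx => hu x (hsub (Ioo_subset_Icc_self hx))) (fun x _ => ?_)
      (fun x hx => hu'le x (hsub (Ioo_subset_Icc_self hx)))
    exact (((hasDerivAt_pow 2 x).const_mul M).div_const 6).congr_deriv (by ring)
  nlinarith [mul_nonneg hM (sq_nonneg s)]

end RadialProblem

lemma tendstoUniformlyOn_of_abs_sub_le {ι α : Type*} {l : Filter ι} {u : ι → α → ℝ} {c : ℝ}
    {S : Set α} {C : ι → ℝ} (hC : Tendsto C l (𝓝 0)) (hu : ∀ᶠ R in l, ∀ s ∈ S, |u R s - c| ≤ C R) :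
    TendstoUniformlyOn u (fun _ => c) l S := by
  rw [Metric.tendstoUniformlyOn_iff]
  intro ε hε
  filter_upwards [hC.eventually (gt_mem_nhds hε), hu] with R hCR hR s hs
  rw [dist_comm, Real.dist_eq]
  exact (hR s hs).trans_lt hCR

theorem stmt4_general
    (f : ℝ → ℝ) (hf0 : f 0 = 0)
    (hfmono : StrictMonoOn f (Set.Ici 0))
    (β σb : ℝ) (hβ : 0 < β) (hσb : 0 < σb)
    (u u' u'' : ℝ → ℝ → ℝ)
    (hu : ∀ R > (0:ℝ), ∀ s ∈ Set.Icc (0:ℝ) 1, HasDerivAt (u R) (u' R s) s)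
    (hu' : ∀ R > (0:ℝ), ∀ s ∈ Set.Icc (0:ℝ) 1, HasDerivAt (u' R) (u'' R s) s)
    (hode : ∀ R > (0:ℝ), ∀ s ∈ Set.Ioo (0:ℝ) 1,
      u'' R s + (2 / s) * u' R s = R ^ 2 * f (u R s))
    (hbc0 : ∀ R > (0:ℝ), u' R 0 = 0)
    (hbc1 : ∀ R > (0:ℝ), u' R 1 + β * R * (u R 1 - σb) = 0)
    (hbd : ∀ R > (0:ℝ), ∀ s ∈ Set.Icc (0:ℝ) 1, 0 ≤ u R s ∧ u R s ≤ σb) :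
    (∀ R > (0:ℝ), ∀ s ∈ Set.Icc (0:ℝ) 1,
      |u R s - σb| ≤ R / (3 * β) * f σb
        + R ^ 2 * f σb * ∫ τ in (0:ℝ)..1, (1 / τ ^ 2) * ∫ l in (0:ℝ)..τ, l ^ 2) ∧
    TendstoUniformlyOn (fun R s => u R s) (fun _ => σb)
      (nhdsWithin 0 (Set.Ioi 0)) (Set.Icc 0 1) := by
  have hσb_mem : σb ∈ Ici (0:ℝ) := le_of_lt hσb
  have hfσb : 0 ≤ f σb := hf0 ▸ hfmono.monotoneOn self_mem_Ici hσb_mem hσb.le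
  have hbound : ∀ R > (0:ℝ), ∀ s ∈ Icc (0:ℝ) 1,
      |u R s - σb| ≤ R / (3 * β) * f σb + R ^ 2 * f σb * (1 / 6) := by
    intro R hR s hs
    have hsource : ∀ x ∈ Ioo (0:ℝ) 1, R ^ 2 * f (u R x) ≤ R ^ 2 * f σb := fun x hx =>
      have hx := hbd R hR x (Ioo_subset_Icc_self hx)
      mul_le_mul_of_nonneg_left (hfmono.monotoneOn hx.1 hσb_mem hx.2) (sq_nonneg R)
    have hdeficit := sub_le_of_deriv_le_of_robin (mul_nonneg (sq_nonneg R) hfσb) (mul_pos hβ hR)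
      (hu R hR) (deriv_le_of_radial_ode (hu' R hR) (hode R hR) hsource (hbc0 R hR)) (hbc1 R hR)
      s hs
    have hscale : R ^ 2 * f σb / (3 * (β * R)) = R / (3 * β) * f σb := by
      field_simp
    rw [abs_sub_comm, abs_of_nonneg (sub_nonneg.2 (hbd R hR s hs).2)]
    linarith
  refine ⟨by simpa only [integral_inv_sq_mul_integral_sq, one_pow] using hbound,
    tendstoUniformlyOn_of_abs_sub_le ?_ (eventually_nhdsWithin_of_forall hbound)⟩
  have hC : Continuous fun R : ℝ => R / (3 * β) * f σb + R ^ 2 * f σb * (1 / 6) := by fun_prop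
  simpa using (hC.tendsto 0).mono_left nhdsWithin_le_nhds

/-- uniform estimate and convergence u_R → σ̄ as R → 0⁺. -/
theorem stmt4
    (f : ℝ → ℝ) (hfc : ContinuousOn f (Set.Ici 0)) (hf0 : f 0 = 0)
    (hfmono : StrictMonoOn f (Set.Ici 0))
    (β σb : ℝ) (hβ : 0 < β) (hσb : 0 < σb)
    (u u' u'' : ℝ → ℝ → ℝ)
    (hu : ∀ R > (0:ℝ), ∀ s ∈ Set.Icc (0:ℝ) 1, HasDerivAt (u R) (u' R s) s)
    (hu' : ∀ R > (0:ℝ), ∀ s ∈ Set.Icc (0:ℝ) 1, HasDerivAt (u' R) (u'' R s) s)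
    (hode : ∀ R > (0:ℝ), ∀ s ∈ Set.Ioo (0:ℝ) 1,
      u'' R s + (2 / s) * u' R s = R ^ 2 * f (u R s))
    (hbc0 : ∀ R > (0:ℝ), u' R 0 = 0)
    (hbc1 : ∀ R > (0:ℝ), u' R 1 + β * R * (u R 1 - σb) = 0)
    (hbd : ∀ R > (0:ℝ), ∀ s ∈ Set.Icc (0:ℝ) 1, 0 ≤ u R s ∧ u R s ≤ σb) :
    (∀ R > (0:ℝ), ∀ s ∈ Set.Icc (0:ℝ) 1,
      |u R s - σb| ≤ R / (3 * β) * f σb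
        + R ^ 2 * f σb * ∫ τ in (0:ℝ)..1, (1 / τ ^ 2) * ∫ l in (0:ℝ)..τ, l ^ 2) ∧
    TendstoUniformlyOn (fun R s => u R s) (fun _ => σb)
      (nhdsWithin 0 (Set.Ioi 0)) (Set.Icc 0 1) :=
  stmt4_general f hf0 hfmono β σb hβ hσb u u' u'' hu hu' hode hbc0 hbc1 hbd
end

section
/- Let f : [0,∞) → ℝ be continuous, nonnegative, strictly increasing with f(0) = 0. For each R > 0 and η ∈ [0,1), suppose u_R is a C² solution on [η,1] of u'' + (2/s)u' = R² f(u), u'(η) = 0, u'(1) + βR(u(1) − σ̄) = 0, with 0 ≤ u_R ≤ σ̄, and suppose u_R(s) is nondecreasing in s and nonincreasing in R for each fixed s. Then lim_{R→+∞} u_R(s) = 0 for every s ∈ [η,1), uniformly on compact subsets of [η,1). -/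
open Set Filter Topology MeasureTheory

/-!
The flux `s² u_R'(s)` vanishes at `η` and has derivative `R² s² f(u_R(s)) ≥ 0`, so it is
nonnegative. If `u_R(s₀) ≥ ε`, monotonicity of `u_R` and of `f` gives `f(u_R) ≥ f(ε) > 0` on
`[s₀, 1]`; integrating twice, `u_R(1) - u_R(s₀) ≥ R² f(ε) (1 - s₀)² (1 + 2s₀ + 3s₀²) / 12`, which
exceeds the bound `σ̄` once `R` is large. Since `u_R` is nondecreasing in `s`, its supremum on
`[η, b]` is `u_R(b)`, whence the uniform convergence.
-/

theorem sub_le_sub_of_hasDerivAt_le_s7 {F G F' G' : ℝ → ℝ} {a b : ℝ} (hab : a ≤ b)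
    (hF : ∀ x ∈ Icc a b, HasDerivAt F (F' x) x) (hG : ∀ x ∈ Icc a b, HasDerivAt G (G' x) x)
    (hle : ∀ x ∈ Ioo a b, G' x ≤ F' x) :
    G b - G a ≤ F b - F a := by
  have hmono : MonotoneOn (fun x => F x - G x) (Icc a b) := by
    refine monotoneOn_of_hasDerivWithinAt_nonneg (convex_Icc a b)
      (fun x hx => ((hF x hx).sub (hG x hx)).continuousAt.continuousWithinAt)
      (fun x hx => ?_) (fun x hx => ?_) (f' := fun x => F' x - G' x)
    · rw [interior_Icc] at hx
      exact ((hF x (Ioo_subset_Icc_self hx)).sub (hG x (Ioo_subset_Icc_self hx))).hasDerivWithinAt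
    · rw [interior_Icc] at hx
      exact sub_nonneg.2 (hle x hx)
  have := hmono (left_mem_Icc.2 hab) (right_mem_Icc.2 hab) hab
  simp only at this
  linarith

/-- Valid also at `x = 0`, where both sides vanish (`2 / 0 = 0`). -/
theorem hasDerivAt_sq_mul {v : ℝ → ℝ} {a x : ℝ} (hv : HasDerivAt v a x) :
    HasDerivAt (fun y => y ^ 2 * v y) (x ^ 2 * (a + 2 / x * v x)) x := by
  refine ((hasDerivAt_pow 2 x).mul hv).congr_deriv ?_
  rcases eq_or_ne x 0 with rfl | hx
  · simp
  · field_simp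
    ring

structure IsRadialSolution (f : ℝ → ℝ) (lam η : ℝ) (w w' w'' : ℝ → ℝ) : Prop where
  hasDerivAt : ∀ s ∈ Icc η 1, HasDerivAt w (w' s) s
  hasDerivAt_deriv : ∀ s ∈ Icc η 1, HasDerivAt w' (w'' s) s
  ode : ∀ s ∈ Ioo η 1, w'' s + 2 / s * w' s = lam * f (w s)

namespace IsRadialSolution

variable {f w w' w'' : ℝ → ℝ} {lam η : ℝ}

theorem hasDerivAt_flux (h : IsRadialSolution f lam η w w' w'') {s : ℝ} (hs : s ∈ Icc η 1) :
    HasDerivAt (fun x => x ^ 2 * w' x) (s ^ 2 * (w'' s + 2 / s * w' s)) s :=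
  hasDerivAt_sq_mul (h.hasDerivAt_deriv s hs)

theorem flux_nonneg (h : IsRadialSolution f lam η w w' w'') (hlam : 0 ≤ lam)
    (hf : ∀ s ∈ Ioo η 1, 0 ≤ f (w s)) (hη : w' η = 0) {s : ℝ} (hs : s ∈ Icc η 1) :
    0 ≤ s ^ 2 * w' s := by
  have := sub_le_sub_of_hasDerivAt_le_s7 hs.1 (G := fun _ => 0) (G' := fun _ => 0)
    (fun x hx => h.hasDerivAt_flux ⟨hx.1, hx.2.trans hs.2⟩)
    (fun x _ => hasDerivAt_const x 0)
    (fun x hx => by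
      rw [h.ode x ⟨hx.1, hx.2.trans_le hs.2⟩]
      have := hf x ⟨hx.1, hx.2.trans_le hs.2⟩
      positivity)
  simpa [hη] using this

theorem flux_sub_ge (h : IsRadialSolution f lam η w w' w'') (hlam : 0 ≤ lam) {c s₀ s : ℝ}
    (hc : ∀ τ ∈ Ioo s₀ 1, c ≤ f (w τ)) (hs₀ : η ≤ s₀) (hs : s ∈ Icc s₀ 1) :
    lam * c * (s ^ 3 - s₀ ^ 3) / 3 ≤ s ^ 2 * w' s - s₀ ^ 2 * w' s₀ := by
  have := sub_le_sub_of_hasDerivAt_le_s7 hs.1 (G := fun x => lam * c * x ^ 3 / 3)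
    (fun x hx => h.hasDerivAt_flux ⟨hs₀.trans hx.1, hx.2.trans hs.2⟩)
    (fun x _ => (((hasDerivAt_pow 3 x).const_mul (lam * c)).div_const 3))
    (fun x hx => by
      have hx' : x ∈ Ioo s₀ 1 := ⟨hx.1, hx.2.trans_le hs.2⟩
      rw [h.ode x ⟨hs₀.trans_lt hx'.1, hx'.2⟩]
      have := mul_le_mul_of_nonneg_left (hc x hx') (mul_nonneg (sq_nonneg x) hlam)
      norm_num
      nlinarith)
  linarith

/-- The constant is `∫_{s₀}^1 (x³ - s₀³) / 3 dx`, from `w' ≥ x² w' ≥ lam c (x³ - s₀³) / 3`. -/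
theorem gain (h : IsRadialSolution f lam η w w' w'') (hlam : 0 ≤ lam)
    (hf : ∀ s ∈ Ioo η 1, 0 ≤ f (w s)) (hη : w' η = 0) {c s₀ : ℝ}
    (hc : ∀ τ ∈ Ioo s₀ 1, c ≤ f (w τ)) (hs₀0 : 0 ≤ s₀) (hs₀ : η ≤ s₀) (hs₀1 : s₀ < 1) :
    lam * c * ((1 - s₀) ^ 2 * (1 + 2 * s₀ + 3 * s₀ ^ 2) / 12) ≤ w 1 - w s₀ := by
  have := sub_le_sub_of_hasDerivAt_le_s7 hs₀1.le (F' := w')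
    (G := fun x => lam * c * (x ^ 4 / 12 - s₀ ^ 3 * x / 3))
    (fun x hx => h.hasDerivAt x ⟨hs₀.trans hx.1, hx.2⟩)
    (fun x _ => ((((hasDerivAt_pow 4 x).div_const 12).sub
      ((hasDerivAt_id x).const_mul (s₀ ^ 3) |>.div_const 3)).const_mul (lam * c)))
    (fun x hx => by
      have hx0 : 0 < x := hs₀0.trans_lt hx.1
      have hflux := h.flux_sub_ge hlam hc hs₀ (Ioo_subset_Icc_self hx)
      have hs₀flux := h.flux_nonneg hlam hf hη ⟨hs₀, hs₀1.le⟩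
      have hxflux := h.flux_nonneg hlam hf hη ⟨hs₀.trans hx.1.le, hx.2.le⟩
      have hw'x : 0 ≤ w' x := nonneg_of_mul_nonneg_right hxflux (by positivity)
      have : x ^ 2 * w' x ≤ w' x := mul_le_of_le_one_left hw'x (by nlinarith [hx.2])
      norm_num
      nlinarith)
  linarith

theorem lt_of_lt_gain (h : IsRadialSolution f lam η w w' w'') (hlam : 0 ≤ lam)
    (hf : ∀ x ∈ Ici 0, 0 ≤ f x) (hfmono : MonotoneOn f (Ici 0)) {σ : ℝ}
    (hbd : ∀ s ∈ Icc η 1, 0 ≤ w s ∧ w s ≤ σ) (hmono : MonotoneOn w (Icc η 1))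
    (hη : w' η = 0) {s₀ ε : ℝ} (hs₀0 : 0 ≤ s₀) (hs₀ : s₀ ∈ Ico η 1) (hε : 0 ≤ ε)
    (hlt : σ < lam * f ε * ((1 - s₀) ^ 2 * (1 + 2 * s₀ + 3 * s₀ ^ 2) / 12)) :
    w s₀ < ε := by
  by_contra! hle
  have hIcc : Icc s₀ 1 ⊆ Icc η 1 := Icc_subset_Icc_left hs₀.1
  have hc : ∀ τ ∈ Ioo s₀ 1, f ε ≤ f (w τ) := fun τ hτ =>
    hfmono hε (hbd τ (hIcc (Ioo_subset_Icc_self hτ))).1 <|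
      hle.trans (hmono (hIcc (left_mem_Icc.2 hs₀.2.le)) (hIcc (Ioo_subset_Icc_self hτ)) hτ.1.le)
  have hgain := h.gain hlam (fun s hs => hf _ (hbd s (Ioo_subset_Icc_self hs)).1) hη hc hs₀0
    hs₀.1 hs₀.2
  have h1 := (hbd 1 (hIcc (right_mem_Icc.2 hs₀.2.le))).2
  have h0 := (hbd s₀ (Ico_subset_Icc_self hs₀)).1
  linarith

end IsRadialSolution

theorem tendstoUniformlyOn_zero_of_le {ι α : Type*} {l : Filter ι} {F : ι → α → ℝ} {g : ι → ℝ}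
    {S : Set α} (hg : Tendsto g l (𝓝 0)) (hF : ∀ᶠ i in l, ∀ x ∈ S, 0 ≤ F i x ∧ F i x ≤ g i) :
    TendstoUniformlyOn F (fun _ => 0) l S := by
  rw [Metric.tendstoUniformlyOn_iff]
  intro ε hε
  filter_upwards [hF, (tendsto_order.1 hg).2 ε hε] with i hi hgi x hx
  rw [dist_comm, Real.dist_0_eq_abs, abs_of_nonneg (hi x hx).1]
  exact (hi x hx).2.trans_lt hgi

theorem stmt7_general
    (f : ℝ → ℝ) (hf0 : f 0 = 0)
    (hfnonneg : ∀ x ∈ Set.Ici (0:ℝ), 0 ≤ f x)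
    (hfmono : StrictMonoOn f (Set.Ici 0))
    (σb η : ℝ) (hη0 : 0 ≤ η)
    (u u' u'' : ℝ → ℝ → ℝ)
    (hu : ∀ R > (0:ℝ), ∀ s ∈ Set.Icc η 1, HasDerivAt (u R) (u' R s) s)
    (hu' : ∀ R > (0:ℝ), ∀ s ∈ Set.Icc η 1, HasDerivAt (u' R) (u'' R s) s)
    (hode : ∀ R > (0:ℝ), ∀ s ∈ Set.Ioo η 1,
      u'' R s + (2 / s) * u' R s = R ^ 2 * f (u R s))
    (hbcη : ∀ R > (0:ℝ), u' R η = 0)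
    (hbd : ∀ R > (0:ℝ), ∀ s ∈ Set.Icc η 1, 0 ≤ u R s ∧ u R s ≤ σb)
    (hmono_s : ∀ R > (0:ℝ), MonotoneOn (u R) (Set.Icc η 1)) :
    (∀ s ∈ Set.Ico η 1, Filter.Tendsto (fun R => u R s) Filter.atTop (nhds 0)) ∧
    (∀ b, η ≤ b → b < 1 →
      TendstoUniformlyOn (fun R s => u R s) (fun _ => 0) Filter.atTop
        (Set.Icc η b)) := by
  have hpt : ∀ s ∈ Ico η 1, Tendsto (fun R => u R s) atTop (𝓝 0) := by
    intro s hs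
    have hs0 : 0 ≤ s := hη0.trans hs.1
    refine tendsto_order.2 ⟨fun a ha => ?_, fun ε hε => ?_⟩
    · filter_upwards [eventually_gt_atTop 0] with R hR
      exact ha.trans_le (hbd R hR s (Ico_subset_Icc_self hs)).1
    · have hfε : 0 < f ε := hf0 ▸ hfmono self_mem_Ici hε.le hε
      have hκ : 0 < (1 - s) ^ 2 * (1 + 2 * s + 3 * s ^ 2) / 12 := by
        have := sub_pos.2 hs.2
        positivity
      have hlarge := (tendsto_pow_atTop two_ne_zero).atTop_mul_const (mul_pos hfε hκ)
      filter_upwards [eventually_gt_atTop 0, hlarge.eventually_gt_atTop σb] with R hR hRσ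
      exact IsRadialSolution.lt_of_lt_gain ⟨hu R hR, hu' R hR, hode R hR⟩ (sq_nonneg R)
        hfnonneg hfmono.monotoneOn (hbd R hR) (hmono_s R hR) (hbcη R hR) hs0 hs hε.le
        (by linarith)
  refine ⟨hpt, fun b hb hb1 => tendstoUniformlyOn_zero_of_le (hpt b ⟨hb, hb1⟩) ?_⟩
  filter_upwards [eventually_gt_atTop 0] with R hR s hs
  have hsub : Icc η b ⊆ Icc η 1 := Icc_subset_Icc_right hb1.le
  exact ⟨(hbd R hR s (hsub hs)).1,
    hmono_s R hR (hsub hs) (hsub (right_mem_Icc.2 hb)) hs.2⟩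

/-- u_R → 0 as R → ∞, pointwise on [η,1) and uniformly on
compact subsets of [η,1). -/
theorem stmt7
    (f : ℝ → ℝ) (hfc : ContinuousOn f (Set.Ici 0)) (hf0 : f 0 = 0)
    (hfnonneg : ∀ x ∈ Set.Ici (0:ℝ), 0 ≤ f x)
    (hfmono : StrictMonoOn f (Set.Ici 0))
    (β σb η : ℝ) (hβ : 0 < β) (hσb : 0 < σb) (hη0 : 0 ≤ η) (hη1 : η < 1)
    (u u' u'' : ℝ → ℝ → ℝ)
    (hu : ∀ R > (0:ℝ), ∀ s ∈ Set.Icc η 1, HasDerivAt (u R) (u' R s) s)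
    (hu' : ∀ R > (0:ℝ), ∀ s ∈ Set.Icc η 1, HasDerivAt (u' R) (u'' R s) s)
    (hode : ∀ R > (0:ℝ), ∀ s ∈ Set.Ioo η 1,
      u'' R s + (2 / s) * u' R s = R ^ 2 * f (u R s))
    (hbcη : ∀ R > (0:ℝ), u' R η = 0)
    (hbc1 : ∀ R > (0:ℝ), u' R 1 + β * R * (u R 1 - σb) = 0)
    (hbd : ∀ R > (0:ℝ), ∀ s ∈ Set.Icc η 1, 0 ≤ u R s ∧ u R s ≤ σb)
    (hmono_s : ∀ R > (0:ℝ), MonotoneOn (u R) (Set.Icc η 1))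
    (hanti_R : ∀ s ∈ Set.Icc η 1, AntitoneOn (fun R => u R s) (Set.Ioi 0)) :
    (∀ s ∈ Set.Ico η 1, Filter.Tendsto (fun R => u R s) Filter.atTop (nhds 0)) ∧
    (∀ b, η ≤ b → b < 1 →
      TendstoUniformlyOn (fun R s => u R s) (fun _ => 0) Filter.atTop
        (Set.Icc η b)) :=
  stmt7_general f hf0 hfnonneg hfmono σb η hη0 u u' u'' hu hu' hode hbcη hbd hmono_s
end

section
/- Let f be C¹ on [0,∞) with f(0)=0 and 0 < f' ≤ M. Let W : [0,1] → ℝ be a C² solution of W''(s) + (2/s)W'(s) = R² f(W(s)) on (0,1) with W'(0) = 0 and W(0) = σ_D > 0, W ≥ σ_D. Then for all s ∈ [0,1]: (R² f(σ_D)/3) s ≤ W'(s) ≤ (M R²/3) s W(s), and consequently σ_D + (R² f(σ_D)/6) s² ≤ W(s) ≤ σ_D e^{M R² s²/6}. -/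
/-!
Writing the equation as `(s² W')' = s² R² f(W)` and using `W'(0) = 0`, the flux `s² W'(s)` is
compared with `s³/3` times the lower bound `R² f(σ_D) ≤ R² f(W)` (f is increasing and `W ≥ σ_D`)
and with `s³ W(s)/3` times the upper bound `R² f(W) ≤ M R² W` (`f(0) = 0`, `f' ≤ M`, and W is
nondecreasing because `W' ≥ 0`). Integrating the two bounds on `W'` gives the bounds on `W`, the
upper one through the integrating factor `exp(-M R² s²/6)`.
-/

open Set Real

theorem le_of_hasDerivAt_le_of_le_left {a b : ℝ} {F G F' G' : ℝ → ℝ}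
    (hF : ∀ s ∈ Icc a b, HasDerivAt F (F' s) s) (hG : ∀ s ∈ Icc a b, HasDerivAt G (G' s) s)
    (hder : ∀ s ∈ Ioo a b, F' s ≤ G' s) (ha : F a ≤ G a) :
    ∀ s ∈ Icc a b, F s ≤ G s := by
  have hD : ∀ s ∈ Icc a b, HasDerivAt (G - F) (G' s - F' s) s :=
    fun s hs ↦ (hG s hs).sub (hF s hs)
  have hmono : MonotoneOn (G - F) (Icc a b) :=
    monotoneOn_of_hasDerivWithinAt_nonneg (convex_Icc a b)
      (fun s hs ↦ (hD s hs).continuousAt.continuousWithinAt)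
      (fun s hs ↦ (hD s (interior_subset hs)).hasDerivWithinAt)
      (fun s hs ↦ sub_nonneg.2 (hder s (by rwa [interior_Icc] at hs)))
  intro s hs
  have := hmono (left_mem_Icc.2 (hs.1.trans hs.2)) hs hs.1
  simp only [Pi.sub_apply] at this
  linarith

theorem monotoneOn_Ici_of_hasDerivAt_nonneg {a : ℝ} {f f' : ℝ → ℝ}
    (hf : ∀ x ∈ Ici a, HasDerivAt f (f' x) x) (hf' : ∀ x ∈ Ioi a, 0 ≤ f' x) :
    MonotoneOn f (Ici a) :=
  monotoneOn_of_hasDerivWithinAt_nonneg (convex_Ici a)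
    (fun x hx ↦ (hf x hx).continuousAt.continuousWithinAt)
    (fun x hx ↦ (hf x (interior_subset hx)).hasDerivWithinAt)
    (fun x hx ↦ hf' x (by rwa [interior_Ici] at hx))

theorem le_mul_of_hasDerivAt_le {f f' : ℝ → ℝ} {M x : ℝ}
    (hf : ∀ x ∈ Ici 0, HasDerivAt f (f' x) x) (hf0 : f 0 = 0) (hM : ∀ x ∈ Ioi 0, f' x ≤ M)
    (hx : 0 ≤ x) : f x ≤ M * x :=
  le_of_hasDerivAt_le_of_le_left (a := 0) (b := x) (G := (M * ·)) (G' := fun _ ↦ M)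
    (fun y hy ↦ hf y hy.1) (fun y _ ↦ by simpa using (hasDerivAt_id y).const_mul M)
    (fun y hy ↦ hM y hy.1) (by simp [hf0]) x ⟨hx, le_rfl⟩

section RadialEquation

variable {T : ℝ} {W W' W'' q : ℝ → ℝ}

theorem hasDerivAt_sq_mul_s9 {s : ℝ} (hs : HasDerivAt W' (W'' s) s) :
    HasDerivAt (fun t ↦ t ^ 2 * W' t) (2 * s * W' s + s ^ 2 * W'' s) s :=
  ((hasDerivAt_pow 2 s).mul hs).congr_deriv (by push_cast; ring)

theorem flux_eq_of_radial_eq {s : ℝ} (hs : s ≠ 0) (hode : W'' s + 2 / s * W' s = q s) :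
    2 * s * W' s + s ^ 2 * W'' s = s ^ 2 * q s := by
  rw [← hode]
  field_simp
  ring

variable (hW' : ∀ s ∈ Icc 0 T, HasDerivAt W' (W'' s) s)
  (hode : ∀ s ∈ Ioo 0 T, W'' s + 2 / s * W' s = q s) (hbc0 : W' 0 = 0)
include hW' hode hbc0

theorem mul_le_deriv_of_le_source {c : ℝ} (hq : ∀ s ∈ Ioo 0 T, c ≤ q s) :
    ∀ s ∈ Icc 0 T, c / 3 * s ≤ W' s := by
  have hflux := le_of_hasDerivAt_le_of_le_left (F := fun t ↦ t ^ 2 * (c / 3 * t))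
    (F' := fun t ↦ c * t ^ 2)
    (fun s _ ↦ ((hasDerivAt_pow 2 s).mul ((hasDerivAt_id' s).const_mul (c / 3))).congr_deriv
      (by push_cast; ring))
    (fun s hs ↦ hasDerivAt_sq_mul_s9 (hW' s hs))
    (fun s hs ↦ by
      rw [flux_eq_of_radial_eq hs.1.ne' (hode s hs), mul_comm]
      exact mul_le_mul_of_nonneg_left (hq s hs) (sq_nonneg s))
    (by simp [hbc0])
  intro s hs
  rcases eq_or_ne s 0 with rfl | hs0
  · simp [hbc0]
  · exact le_of_mul_le_mul_left (hflux s hs) (by positivity)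

theorem deriv_le_of_source_le_mul {b : ℝ} (hb : 0 ≤ b)
    (hW : ∀ s ∈ Icc 0 T, HasDerivAt W (W' s) s)
    (hW'_nonneg : ∀ s ∈ Ioo 0 T, 0 ≤ W' s) (hq : ∀ s ∈ Ioo 0 T, q s ≤ b * W s) :
    ∀ s ∈ Icc 0 T, W' s ≤ b / 3 * s * W s := by
  have hflux := le_of_hasDerivAt_le_of_le_left (G := fun t ↦ t ^ 2 * (b / 3 * t * W t))
    (G' := fun t ↦ b * t ^ 2 * W t + b / 3 * t ^ 3 * W' t)
    (fun s hs ↦ hasDerivAt_sq_mul_s9 (hW' s hs))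
    (fun s hs ↦ ((hasDerivAt_pow 2 s).mul
      (((hasDerivAt_id' s).const_mul (b / 3)).mul (hW s hs))).congr_deriv
        (by simp only [Pi.mul_apply]; push_cast; ring))
    (fun s hs ↦ by
      rw [flux_eq_of_radial_eq hs.1.ne' (hode s hs)]
      have hsource : s ^ 2 * q s ≤ b * s ^ 2 * W s :=
        (mul_le_mul_of_nonneg_left (hq s hs) (sq_nonneg s)).trans_eq (by ring)
      have hW'_term : 0 ≤ b / 3 * s ^ 3 * W' s :=
        mul_nonneg (by have := hs.1.le; positivity) (hW'_nonneg s hs)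
      linarith)
    (by simp [hbc0])
  intro s hs
  rcases eq_or_ne s 0 with rfl | hs0
  · simp [hbc0]
  · exact le_of_mul_le_mul_left (hflux s hs) (by positivity)

end RadialEquation

section Integration

variable {T σ : ℝ} {W W' : ℝ → ℝ} (hW : ∀ s ∈ Icc 0 T, HasDerivAt W (W' s) s) (hW0 : W 0 = σ)
include hW hW0

theorem add_le_of_mul_le_deriv {c : ℝ} (h : ∀ s ∈ Ioo 0 T, c / 3 * s ≤ W' s) :
    ∀ s ∈ Icc 0 T, σ + c / 6 * s ^ 2 ≤ W s :=
  le_of_hasDerivAt_le_of_le_left (F' := fun t ↦ c / 3 * t)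
    (fun s _ ↦ (((hasDerivAt_pow 2 s).const_mul (c / 6)).const_add σ).congr_deriv
      (by push_cast; ring))
    hW h (by simp [hW0])

theorem le_mul_exp_of_deriv_le {b : ℝ} (h : ∀ s ∈ Ioo 0 T, W' s ≤ b / 3 * s * W s) :
    ∀ s ∈ Icc 0 T, W s ≤ σ * exp (b * s ^ 2 / 6) := by
  have hdamped := le_of_hasDerivAt_le_of_le_left
    (F := fun t ↦ W t * exp (-(b * t ^ 2 / 6)))
    (F' := fun t ↦ (W' t - b / 3 * t * W t) * exp (-(b * t ^ 2 / 6)))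
    (G := fun _ ↦ σ) (G' := fun _ ↦ 0)
    (fun s hs ↦ by
      have hexp := (((hasDerivAt_pow 2 s).const_mul b).div_const 6).neg.exp
      exact ((hW s hs).mul hexp).congr_deriv (by simp only [Pi.neg_apply]; push_cast; ring))
    (fun s _ ↦ hasDerivAt_const s σ)
    (fun s hs ↦ mul_nonpos_of_nonpos_of_nonneg (sub_nonpos.2 (h s hs)) (exp_pos _).le)
    (by simp [hW0])
  intro s hs
  have := mul_le_mul_of_nonneg_right (hdamped s hs) (exp_pos (b * s ^ 2 / 6)).le
  rwa [mul_assoc, ← exp_add, neg_add_cancel, exp_zero, mul_one] at this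

end Integration

theorem stmt9_general
    (f f' : ℝ → ℝ) (M R σD : ℝ) (hM : 0 < M) (hσD : 0 < σD)
    (hf : ∀ x ∈ Set.Ici (0:ℝ), HasDerivAt f (f' x) x)
    (hf0 : f 0 = 0)
    (hf' : ∀ x ∈ Set.Ici (0:ℝ), 0 < f' x ∧ f' x ≤ M)
    (W W' W'' : ℝ → ℝ)
    (hW : ∀ s ∈ Set.Icc (0:ℝ) 1, HasDerivAt W (W' s) s)
    (hW' : ∀ s ∈ Set.Icc (0:ℝ) 1, HasDerivAt W' (W'' s) s)
    (hode : ∀ s ∈ Set.Ioo (0:ℝ) 1,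
      W'' s + (2 / s) * W' s = R ^ 2 * f (W s))
    (hbc0 : W' 0 = 0) (hW0 : W 0 = σD)
    (hWlb : ∀ s ∈ Set.Icc (0:ℝ) 1, σD ≤ W s) :
    ∀ s ∈ Set.Icc (0:ℝ) 1,
      (R ^ 2 * f σD / 3) * s ≤ W' s ∧
      W' s ≤ M * R ^ 2 / 3 * s * W s ∧
      σD + R ^ 2 * f σD / 6 * s ^ 2 ≤ W s ∧
      W s ≤ σD * Real.exp (M * R ^ 2 * s ^ 2 / 6) := by
  have hW_ge : ∀ s ∈ Ioo 0 1, σD ≤ W s := fun s hs ↦ hWlb s (Ioo_subset_Icc_self hs)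
  have hf_mono := monotoneOn_Ici_of_hasDerivAt_nonneg hf fun x hx ↦
    (hf' x (Ioi_subset_Ici_self hx)).1.le
  have hf_σD : 0 ≤ f σD := hf0 ▸ hf_mono self_mem_Ici hσD.le hσD.le
  have hf_le : ∀ x, 0 ≤ x → f x ≤ M * x := fun x ↦
    le_mul_of_hasDerivAt_le hf hf0 fun y hy ↦ (hf' y (Ioi_subset_Ici_self hy)).2
  have hW'_lower := mul_le_deriv_of_le_source hW' hode hbc0 (c := R ^ 2 * f σD) fun s hs ↦
    mul_le_mul_of_nonneg_left (hf_mono hσD.le (hσD.le.trans (hW_ge s hs)) (hW_ge s hs))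
      (sq_nonneg R)
  have hW'_upper := deriv_le_of_source_le_mul hW' hode hbc0 (b := M * R ^ 2) (by positivity) hW
    (fun s hs ↦ (mul_nonneg (by positivity) hs.1.le).trans (hW'_lower s (Ioo_subset_Icc_self hs)))
    fun s hs ↦ calc
      R ^ 2 * f (W s) ≤ R ^ 2 * (M * W s) :=
        mul_le_mul_of_nonneg_left (hf_le _ (hσD.le.trans (hW_ge s hs))) (sq_nonneg R)
      _ = M * R ^ 2 * W s := by ring
  intro s hs
  exact ⟨hW'_lower s hs, hW'_upper s hs,
    add_le_of_mul_le_deriv hW hW0 (fun t ht ↦ hW'_lower t (Ioo_subset_Icc_self ht)) s hs,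
    le_mul_exp_of_deriv_le hW hW0 (fun t ht ↦ hW'_upper t (Ioo_subset_Icc_self ht)) s hs⟩

/-- two-sided bounds for W' and W when W(0) = σ_D. -/
theorem stmt9
    (f f' : ℝ → ℝ) (M R σD : ℝ) (hM : 0 < M) (hR : 0 < R) (hσD : 0 < σD)
    (hf : ∀ x ∈ Set.Ici (0:ℝ), HasDerivAt f (f' x) x)
    (hf0 : f 0 = 0)
    (hf' : ∀ x ∈ Set.Ici (0:ℝ), 0 < f' x ∧ f' x ≤ M)
    (W W' W'' : ℝ → ℝ)
    (hW : ∀ s ∈ Set.Icc (0:ℝ) 1, HasDerivAt W (W' s) s)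
    (hW' : ∀ s ∈ Set.Icc (0:ℝ) 1, HasDerivAt W' (W'' s) s)
    (hode : ∀ s ∈ Set.Ioo (0:ℝ) 1,
      W'' s + (2 / s) * W' s = R ^ 2 * f (W s))
    (hbc0 : W' 0 = 0) (hW0 : W 0 = σD)
    (hWlb : ∀ s ∈ Set.Icc (0:ℝ) 1, σD ≤ W s) :
    ∀ s ∈ Set.Icc (0:ℝ) 1,
      (R ^ 2 * f σD / 3) * s ≤ W' s ∧
      W' s ≤ M * R ^ 2 / 3 * s * W s ∧
      σD + R ^ 2 * f σD / 6 * s ^ 2 ≤ W s ∧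
      W s ≤ σD * Real.exp (M * R ^ 2 * s ^ 2 / 6) :=
  stmt9_general f f' M R σD hM hσD hf hf0 hf' W W' W'' hW hW' hode hbc0 hW0 hWlb
end

section
/- Let G : (0,∞) → ℝ be continuous, strictly decreasing, with G(R) ≥ −ν/3 for all R and lim_{R→0⁺} G(R) = g(σ̄)/3 where g(σ̄) ≤ 0 (so G < 0 on (0,∞)). Then for any R₀ > 0, the unique solution of R'(t) = R(t)G(R(t)), R(0) = R₀, exists for all t ≥ 0, satisfies R₀ e^{−νt/3} ≤ R(t) ≤ R₀, is strictly decreasing, and lim_{t→∞} R(t) = 0. -/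
/-!
Write `F R = R G(R) < 0` and let `T(R) = ∫_{R₀}^R dr / F(r)` be the time the flow needs to go
from `R₀` to `R`. Any positive solution satisfies `(T ∘ ρ)' = 1`, hence `T (ρ t) = t`, and since
`T` is strictly decreasing this determines `ρ`. Conversely `T(R₀) = 0`, and `F(r) ≥ -ν r / 3`
gives `T(R) ≥ (3/ν) log (R₀/R)`, so `T` maps `(0, ∞)` onto an interval containing `[0, ∞)`; its
inverse is the solution, and the bounds, monotonicity and decay of `ρ` are read off `T (ρ t) = t`.
-/

open Set Filter Topology Real

theorem StrictAntiOn.continuousAt_of_image_mem_nhds {α β : Type*} [LinearOrder α]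
    [TopologicalSpace α] [OrderTopology α] [LinearOrder β] [TopologicalSpace β] [OrderTopology β]
    [DenselyOrdered β] {f : α → β} {s : Set α} {a : α}
    (hf : StrictAntiOn f s) (hs : s ∈ 𝓝 a) (hfs : f '' s ∈ 𝓝 (f a)) : ContinuousAt f a :=
  StrictMonoOn.continuousAt_of_image_mem_nhds (f := OrderDual.toDual ∘ f) hf.dual_right hs hfs

/-- The time the solution of `R' = F R` started at `R₀` takes to reach `R`. -/
noncomputable def flowTime (F : ℝ → ℝ) (R₀ R : ℝ) : ℝ := ∫ r in R₀..R, (F r)⁻¹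

noncomputable def flow (F : ℝ → ℝ) (R₀ : ℝ) : ℝ → ℝ := Function.invFunOn (flowTime F R₀) (Ioi 0)

/-- `F r = r G(r)` with `-k ≤ G < 0`. -/
structure IsDecayField (F : ℝ → ℝ) (k : ℝ) : Prop where
  continuousOn : ContinuousOn F (Ioi 0)
  neg : ∀ r ∈ Ioi 0, F r < 0
  pos_rate : 0 < k
  neg_mul_le : ∀ r ∈ Ioi 0, -(k * r) ≤ F r

section

variable {F : ℝ → ℝ} {k R₀ : ℝ}

@[simp]
theorem flowTime_self : flowTime F R₀ R₀ = 0 := intervalIntegral.integral_same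

theorem hasDerivAt_flowTime (hF : ContinuousOn F (Ioi 0)) (hF0 : ∀ r ∈ Ioi 0, F r ≠ 0)
    (hR₀ : 0 < R₀) {R : ℝ} (hR : 0 < R) : HasDerivAt (flowTime F R₀) (F R)⁻¹ R :=
  have hinv := hF.inv₀ hF0
  intervalIntegral.integral_hasDerivAt_right
    (hinv.mono (ordConnected_Ioi.uIcc_subset hR₀ hR)).intervalIntegrable
    (hinv.stronglyMeasurableAtFilter isOpen_Ioi R hR) (hinv.continuousAt (Ioi_mem_nhds hR))

theorem continuousOn_flowTime (hF : ContinuousOn F (Ioi 0)) (hF0 : ∀ r ∈ Ioi 0, F r ≠ 0)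
    (hR₀ : 0 < R₀) : ContinuousOn (flowTime F R₀) (Ioi 0) :=
  fun _ hR => (hasDerivAt_flowTime hF hF0 hR₀ hR).continuousAt.continuousWithinAt

theorem strictAntiOn_flowTime (hF : ContinuousOn F (Ioi 0)) (hFneg : ∀ r ∈ Ioi 0, F r < 0)
    (hR₀ : 0 < R₀) : StrictAntiOn (flowTime F R₀) (Ioi 0) := by
  have hF0 r hr : F r ≠ 0 := (hFneg r hr).ne
  refine strictAntiOn_of_deriv_neg (convex_Ioi 0) (continuousOn_flowTime hF hF0 hR₀) ?_
  intro R hR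
  rw [interior_Ioi] at hR
  rw [(hasDerivAt_flowTime hF hF0 hR₀ hR).deriv]
  exact inv_lt_zero.2 (hFneg R hR)

theorem flowTime_comp_eq_of_hasDerivAt (hF : ContinuousOn F (Ioi 0))
    (hF0 : ∀ r ∈ Ioi 0, F r ≠ 0) {ρ : ℝ → ℝ} (hρ0 : ρ 0 = R₀) (hρpos : ∀ t ∈ Ici (0:ℝ), 0 < ρ t)
    (hρ : ∀ t ∈ Ici (0:ℝ), HasDerivAt ρ (F (ρ t)) t) {t : ℝ} (ht : 0 ≤ t) :
    flowTime F R₀ (ρ t) = t := by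
  have hR₀ : 0 < R₀ := hρ0 ▸ hρpos 0 self_mem_Ici
  have hderiv s (hs : 0 ≤ s) : HasDerivAt (flowTime F R₀ ∘ ρ) 1 s := by
    have hpos := hρpos s hs
    simpa only [inv_mul_cancel₀ (hF0 _ hpos)] using
      (hasDerivAt_flowTime hF hF0 hR₀ hpos).comp s (hρ s hs)
  refine eq_of_has_deriv_right_eq (f' := fun _ => 1) (b := t)
    (fun s hs => (hderiv s hs.1).hasDerivWithinAt) (fun s _ => (hasDerivAt_id s).hasDerivWithinAt)
    (fun s hs => (hderiv s hs.1).continuousAt.continuousWithinAt) continuousOn_id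
    (by simp [hρ0]) t ⟨ht, le_rfl⟩

namespace IsDecayField

theorem mul_exp_neg_flowTime_le (hF : IsDecayField F k) {R : ℝ} (hR : 0 < R) (hRR₀ : R ≤ R₀) :
    R₀ * exp (-(k * flowTime F R₀ R)) ≤ R := by
  have hR₀ := hR.trans_le hRR₀
  have hsub : uIcc R R₀ ⊆ Ioi 0 := ordConnected_Ioi.uIcc_subset hR hR₀
  have hlog : log (R₀ / R) / k ≤ flowTime F R₀ R := calc
    log (R₀ / R) / k = ∫ r in R..R₀, k⁻¹ * r⁻¹ := by
      rw [intervalIntegral.integral_const_mul, integral_inv_of_pos hR hR₀, div_eq_inv_mul]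
    _ ≤ ∫ r in R..R₀, -(F r)⁻¹ := by
      refine intervalIntegral.integral_mono_on hRR₀ ?_ ?_ fun r hr => ?_
      · exact ((continuousOn_inv₀.mono fun x hx => (hsub hx).ne').const_smul k⁻¹).intervalIntegrable
      · exact ((hF.continuousOn.inv₀ fun r hr => (hF.neg r hr).ne).mono hsub).neg.intervalIntegrable
      · have hr0 : 0 < r := hR.trans_le hr.1
        rw [← mul_inv, ← inv_neg]
        exact inv_anti₀ (neg_pos.2 (hF.neg r hr0)) (by linarith [hF.neg_mul_le r hr0])
    _ = flowTime F R₀ R := by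
      rw [intervalIntegral.integral_neg, intervalIntegral.integral_symm, neg_neg]; rfl
  rw [div_le_iff₀ hF.pos_rate, log_div hR₀.ne' hR.ne', sub_le_iff_le_add] at hlog
  calc R₀ * exp (-(k * flowTime F R₀ R)) = exp (log R₀ - k * flowTime F R₀ R) := by
        rw [sub_eq_add_neg, exp_add, exp_log hR₀]
    _ ≤ exp (log R) := exp_le_exp.2 (by linarith)
    _ = R := exp_log hR

theorem Ici_subset_image_flowTime (hF : IsDecayField F k) (hR₀ : 0 < R₀) {R₁ : ℝ} (hR₁ : 0 < R₁) :
    Ici (flowTime F R₀ R₁) ⊆ flowTime F R₀ '' Ioi 0 := by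
  intro t ht
  set R := R₀ * exp (-(k * max t 0))
  have hR : 0 < R := by positivity
  have hRR₀ : R ≤ R₀ := mul_le_of_le_one_right hR₀.le
    (exp_le_one_iff.2 (neg_nonpos.2 (mul_nonneg hF.pos_rate.le (le_max_right t 0))))
  have htR : t ≤ flowTime F R₀ R := by
    have := hF.mul_exp_neg_flowTime_le hR hRR₀
    rw [mul_le_mul_iff_right₀ hR₀, exp_le_exp, neg_le_neg_iff,
      mul_le_mul_iff_right₀ hF.pos_rate] at this
    exact (le_max_left t 0).trans this
  have hsub : uIcc R₁ R ⊆ Ioi 0 := ordConnected_Ioi.uIcc_subset hR₁ hR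
  obtain ⟨x, hx, rfl⟩ := intermediate_value_uIcc
    ((continuousOn_flowTime hF.continuousOn (fun r hr => (hF.neg r hr).ne) hR₀).mono hsub)
    (mem_uIcc_of_le ht htR)
  exact ⟨x, hsub hx, rfl⟩

theorem flow_pos (hF : IsDecayField F k) (hR₀ : 0 < R₀) {R₁ : ℝ} (hR₁ : 0 < R₁) {t : ℝ}
    (ht : flowTime F R₀ R₁ ≤ t) : 0 < flow F R₀ t :=
  Function.invFunOn_mem (hF.Ici_subset_image_flowTime hR₀ hR₁ ht)

theorem flowTime_flow (hF : IsDecayField F k) (hR₀ : 0 < R₀) {R₁ : ℝ} (hR₁ : 0 < R₁) {t : ℝ}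
    (ht : flowTime F R₀ R₁ ≤ t) : flowTime F R₀ (flow F R₀ t) = t :=
  Function.invFunOn_eq (hF.Ici_subset_image_flowTime hR₀ hR₁ ht)

theorem flow_flowTime (hF : IsDecayField F k) (hR₀ : 0 < R₀) {R : ℝ} (hR : 0 < R) :
    flow F R₀ (flowTime F R₀ R) = R :=
  (strictAntiOn_flowTime hF.continuousOn hF.neg hR₀).injOn.leftInvOn_invFunOn hR

theorem strictAntiOn_flow (hF : IsDecayField F k) (hR₀ : 0 < R₀) {R₁ : ℝ} (hR₁ : 0 < R₁) :
    StrictAntiOn (flow F R₀) (Ici (flowTime F R₀ R₁)) := by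
  intro s hs t ht hst
  rwa [← (strictAntiOn_flowTime hF.continuousOn hF.neg hR₀).lt_iff_gt
    (hF.flow_pos hR₀ hR₁ hs) (hF.flow_pos hR₀ hR₁ ht), hF.flowTime_flow hR₀ hR₁ hs,
    hF.flowTime_flow hR₀ hR₁ ht]

theorem continuousAt_flow (hF : IsDecayField F k) (hR₀ : 0 < R₀) {R₁ : ℝ} (hR₁ : 0 < R₁) {t : ℝ}
    (ht : flowTime F R₀ R₁ < t) : ContinuousAt (flow F R₀) t := by
  have hanti := strictAntiOn_flowTime hF.continuousOn hF.neg hR₀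
  have hpos := hF.flow_pos hR₀ hR₁ ht.le
  have hlt : flow F R₀ t < R₁ := by
    rwa [← hanti.lt_iff_gt hR₁ hpos, hF.flowTime_flow hR₀ hR₁ ht.le]
  refine ((hF.strictAntiOn_flow hR₀ hR₁).mono Ioi_subset_Ici_self).continuousAt_of_image_mem_nhds
    (Ioi_mem_nhds ht) (mem_of_superset (Ioo_mem_nhds hpos hlt) fun R hR => ?_)
  exact ⟨flowTime F R₀ R, (hanti.lt_iff_gt hR₁ hR.1).2 hR.2, hF.flow_flowTime hR₀ hR.1⟩

theorem hasDerivAt_flow (hF : IsDecayField F k) (hR₀ : 0 < R₀) {R₁ : ℝ} (hR₁ : 0 < R₁) {t : ℝ}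
    (ht : flowTime F R₀ R₁ < t) : HasDerivAt (flow F R₀) (F (flow F R₀ t)) t := by
  have hF0 r (hr : r ∈ Ioi 0) : F r ≠ 0 := (hF.neg r hr).ne
  have hpos := hF.flow_pos hR₀ hR₁ ht.le
  simpa only [inv_inv] using
    (hasDerivAt_flowTime hF.continuousOn hF0 hR₀ hpos).of_local_left_inverse
    (hF.continuousAt_flow hR₀ hR₁ ht) (inv_ne_zero (hF0 _ hpos))
    (eventually_gt_nhds ht |>.mono fun s hs => hF.flowTime_flow hR₀ hR₁ hs.le)

theorem flowTime_flow_of_nonneg (hF : IsDecayField F k) (hR₀ : 0 < R₀) {t : ℝ} (ht : 0 ≤ t) :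
    flowTime F R₀ (flow F R₀ t) = t :=
  hF.flowTime_flow hR₀ hR₀ (by simpa using ht)

theorem flow_pos_of_nonneg (hF : IsDecayField F k) (hR₀ : 0 < R₀) {t : ℝ} (ht : 0 ≤ t) :
    0 < flow F R₀ t :=
  hF.flow_pos hR₀ hR₀ (by simpa using ht)

theorem flow_zero (hF : IsDecayField F k) (hR₀ : 0 < R₀) : flow F R₀ 0 = R₀ := by
  simpa using hF.flow_flowTime hR₀ hR₀

theorem flow_le (hF : IsDecayField F k) (hR₀ : 0 < R₀) {t : ℝ} (ht : 0 ≤ t) : flow F R₀ t ≤ R₀ := by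
  rwa [← (strictAntiOn_flowTime hF.continuousOn hF.neg hR₀).le_iff_ge hR₀
    (hF.flow_pos_of_nonneg hR₀ ht), hF.flowTime_flow_of_nonneg hR₀ ht, flowTime_self]

theorem mul_exp_neg_le_flow (hF : IsDecayField F k) (hR₀ : 0 < R₀) {t : ℝ} (ht : 0 ≤ t) :
    R₀ * exp (-(k * t)) ≤ flow F R₀ t := by
  simpa only [hF.flowTime_flow_of_nonneg hR₀ ht] using
    hF.mul_exp_neg_flowTime_le (hF.flow_pos_of_nonneg hR₀ ht) (hF.flow_le hR₀ ht)

theorem hasDerivAt_flow_of_nonneg (hF : IsDecayField F k) (hR₀ : 0 < R₀) {t : ℝ} (ht : 0 ≤ t) :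
    HasDerivAt (flow F R₀) (F (flow F R₀ t)) t := by
  have hR₁ : 0 < R₀ + 1 := by linarith
  have hneg : flowTime F R₀ (R₀ + 1) < 0 := flowTime_self (F := F) ▸
    strictAntiOn_flowTime hF.continuousOn hF.neg hR₀ hR₀ hR₁ (lt_add_one R₀)
  exact hF.hasDerivAt_flow hR₀ hR₁ (hneg.trans_le ht)

theorem strictAntiOn_flow_Ici_zero (hF : IsDecayField F k) (hR₀ : 0 < R₀) :
    StrictAntiOn (flow F R₀) (Ici 0) := by
  simpa using hF.strictAntiOn_flow hR₀ hR₀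

theorem tendsto_flow_atTop (hF : IsDecayField F k) (hR₀ : 0 < R₀) :
    Tendsto (flow F R₀) atTop (𝓝 0) := by
  refine tendsto_order.2 ⟨fun b hb => ?_, fun b hb => ?_⟩
  · filter_upwards [eventually_ge_atTop 0] with t ht
    exact hb.trans (hF.flow_pos_of_nonneg hR₀ ht)
  · filter_upwards [eventually_gt_atTop (max 0 (flowTime F R₀ b))] with t ht
    have ht0 : 0 ≤ t := (le_max_left _ _).trans ht.le
    rw [← (strictAntiOn_flowTime hF.continuousOn hF.neg hR₀).lt_iff_gt hb
      (hF.flow_pos_of_nonneg hR₀ ht0), hF.flowTime_flow_of_nonneg hR₀ ht0]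
    exact (le_max_right _ _).trans_lt ht

end IsDecayField

end

theorem stmt11_general
    (G : ℝ → ℝ) (ν R₀ : ℝ) (hν : 0 < ν) (hR₀ : 0 < R₀)
    (hc : ContinuousOn G (Set.Ioi 0))
    (hlb : ∀ R ∈ Set.Ioi (0:ℝ), -ν / 3 ≤ G R)
    (hneg : ∀ R ∈ Set.Ioi (0:ℝ), G R < 0) :
    (∃ ρ : ℝ → ℝ, ρ 0 = R₀ ∧
      (∀ t ∈ Set.Ici (0:ℝ), 0 < ρ t) ∧
      (∀ t ∈ Set.Ici (0:ℝ), HasDerivAt ρ (ρ t * G (ρ t)) t) ∧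
      (∀ t ∈ Set.Ici (0:ℝ), R₀ * Real.exp (-ν * t / 3) ≤ ρ t ∧ ρ t ≤ R₀) ∧
      StrictAntiOn ρ (Set.Ici 0) ∧
      Filter.Tendsto ρ Filter.atTop (nhds 0)) ∧
    (∀ ρ₁ ρ₂ : ℝ → ℝ,
      ρ₁ 0 = R₀ → ρ₂ 0 = R₀ →
      (∀ t ∈ Set.Ici (0:ℝ), 0 < ρ₁ t) → (∀ t ∈ Set.Ici (0:ℝ), 0 < ρ₂ t) →
      (∀ t ∈ Set.Ici (0:ℝ), HasDerivAt ρ₁ (ρ₁ t * G (ρ₁ t)) t) →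
      (∀ t ∈ Set.Ici (0:ℝ), HasDerivAt ρ₂ (ρ₂ t * G (ρ₂ t)) t) →
      ∀ t ∈ Set.Ici (0:ℝ), ρ₁ t = ρ₂ t) := by
  set F : ℝ → ℝ := fun R => R * G R
  have hF : IsDecayField F (ν / 3) :=
    { continuousOn := continuousOn_id.mul hc
      neg := fun r hr => mul_neg_of_pos_of_neg hr (hneg r hr)
      pos_rate := by positivity
      neg_mul_le := fun r hr => by nlinarith [hlb r hr, mem_Ioi.1 hr] }
  refine ⟨⟨flow F R₀, hF.flow_zero hR₀, fun t ht => hF.flow_pos_of_nonneg hR₀ ht,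
    fun t ht => hF.hasDerivAt_flow_of_nonneg hR₀ ht, fun t ht => ⟨?_, hF.flow_le hR₀ ht⟩,
    hF.strictAntiOn_flow_Ici_zero hR₀, hF.tendsto_flow_atTop hR₀⟩, ?_⟩
  · convert hF.mul_exp_neg_le_flow hR₀ ht using 3
    ring
  · intro ρ₁ ρ₂ h₁0 h₂0 h₁pos h₂pos h₁ h₂ t ht
    have hF0 r (hr : r ∈ Ioi 0) : F r ≠ 0 := (hF.neg r hr).ne
    exact (strictAntiOn_flowTime hF.continuousOn hF.neg hR₀).injOn (h₁pos t ht) (h₂pos t ht)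
      ((flowTime_comp_eq_of_hasDerivAt hF.continuousOn hF0 h₁0 h₁pos h₁ ht).trans
        (flowTime_comp_eq_of_hasDerivAt hF.continuousOn hF0 h₂0 h₂pos h₂ ht).symm)

/-- when g(σ̄) ≤ 0 (here a ≤ 0) all tumors shrink to zero. -/
theorem stmt11
    (G : ℝ → ℝ) (a ν R₀ : ℝ) (hν : 0 < ν) (hR₀ : 0 < R₀) (ha : a ≤ 0)
    (hc : ContinuousOn G (Set.Ioi 0))
    (hanti : StrictAntiOn G (Set.Ioi 0))
    (hlb : ∀ R ∈ Set.Ioi (0:ℝ), -ν / 3 ≤ G R)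
    (h0 : Filter.Tendsto G (nhdsWithin 0 (Set.Ioi 0)) (nhds (a / 3)))
    (hneg : ∀ R ∈ Set.Ioi (0:ℝ), G R < 0) :
    (∃ ρ : ℝ → ℝ, ρ 0 = R₀ ∧
      (∀ t ∈ Set.Ici (0:ℝ), 0 < ρ t) ∧
      (∀ t ∈ Set.Ici (0:ℝ), HasDerivAt ρ (ρ t * G (ρ t)) t) ∧
      (∀ t ∈ Set.Ici (0:ℝ), R₀ * Real.exp (-ν * t / 3) ≤ ρ t ∧ ρ t ≤ R₀) ∧
      StrictAntiOn ρ (Set.Ici 0) ∧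
      Filter.Tendsto ρ Filter.atTop (nhds 0)) ∧
    (∀ ρ₁ ρ₂ : ℝ → ℝ,
      ρ₁ 0 = R₀ → ρ₂ 0 = R₀ →
      (∀ t ∈ Set.Ici (0:ℝ), 0 < ρ₁ t) → (∀ t ∈ Set.Ici (0:ℝ), 0 < ρ₂ t) →
      (∀ t ∈ Set.Ici (0:ℝ), HasDerivAt ρ₁ (ρ₁ t * G (ρ₁ t)) t) →
      (∀ t ∈ Set.Ici (0:ℝ), HasDerivAt ρ₂ (ρ₂ t * G (ρ₂ t)) t) →
      ∀ t ∈ Set.Ici (0:ℝ), ρ₁ t = ρ₂ t) :=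
  stmt11_general G ν R₀ hν hR₀ hc hlb hneg
end

section
/- Let G : (0,∞) → ℝ be continuous and strictly decreasing with a (unique) zero R_s > 0, and bounded below by −ν/3 and above by g(σ̄)/3 with g(σ̄) > 0. Then for any R₀ > 0, the solution of R'(t) = R(t)G(R(t)), R(0) = R₀, exists globally, satisfies R₀ e^{−νt/3} ≤ R(t) ≤ R₀ e^{g(σ̄)t/3}, and converges monotonically to R_s as t → ∞. -/
open Set Filter Topology Real

/-!
Separation of variables. Below the equilibrium `b` the vector field `F` is positive, so the
travel time `T x = ∫_{x₀}^x ds / F s` is strictly increasing with `T' = 1 / F`; the solution is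
`T⁻¹` for as long as `T` has values, and stays at `b` afterwards if `b` is reached in finite
time. At that arrival time the derivative is still `F b = 0`, because `F ∘ ρ` is continuous
there.
For `R' = R G(R)` the exponential bounds come from `(log R)' = G(R) ∈ [-ν/3, a/3]`, and the
case `R₀ > R_s` is the reflection `x ↦ -x` of the case `R₀ < R_s`.
-/

/-- For `T` strictly increasing on `Iio b`, this is `T⁻¹ t` while `t` lies in `T '' Iio b`,
and `b` for every larger `t`. -/
noncomputable def truncatedInverse (T : ℝ → ℝ) (b t : ℝ) : ℝ :=
  sSup {x | x < b ∧ T x ≤ t}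

section TruncatedInverse

variable {T : ℝ → ℝ} {b t : ℝ}

theorem truncatedInverse_apply (hmono : StrictMonoOn T (Iio b)) {x : ℝ} (hx : x < b) :
    truncatedInverse T b (T x) = x := by
  have : {y | y < b ∧ T y ≤ T x} = Iic x := by
    ext y
    exact ⟨fun hy => (hmono.le_iff_le hy.1 hx).1 hy.2,
      fun hy => ⟨hy.trans_lt hx, hmono.monotoneOn (hy.trans_lt hx) hx hy⟩⟩
  rw [truncatedInverse, this, csSup_Iic]

theorem truncatedInverse_eq_of_forall_lt (h : ∀ x < b, T x < t) :
    truncatedInverse T b t = b := by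
  have : {y | y < b ∧ T y ≤ t} = Iio b := by
    ext y
    exact ⟨And.left, fun hy => ⟨hy, (h y hy).le⟩⟩
  rw [truncatedInverse, this, csSup_Iio]

theorem exists_eq_or_forall_lt (hcont : ContinuousOn T (Iio b)) (hbot : Tendsto T atBot atBot)
    (t : ℝ) : (∃ x < b, T x = t) ∨ ∀ x < b, T x < t := by
  by_contra! ⟨hne, z, hzb, hz⟩
  obtain ⟨w, hTw, hwz⟩ := ((hbot.eventually (eventually_le_atBot t)).and
    (eventually_le_atBot z)).exists
  obtain ⟨x, hx, hTx⟩ := intermediate_value_Icc hwz (hcont.mono fun y hy => hy.2.trans_lt hzb)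
    ⟨hTw, hz⟩
  exact hne x (hx.2.trans_lt hzb) hTx

theorem nonempty_setOf_lt_and_le (hbot : Tendsto T atBot atBot) (t : ℝ) :
    {x | x < b ∧ T x ≤ t}.Nonempty := by
  obtain ⟨x, hxt, hxb⟩ := ((hbot.eventually (eventually_le_atBot t)).and
    (eventually_lt_atBot b)).exists
  exact ⟨x, hxb, hxt⟩

theorem truncatedInverse_le (hbot : Tendsto T atBot atBot) (t : ℝ) :
    truncatedInverse T b t ≤ b :=
  csSup_le (nonempty_setOf_lt_and_le hbot t) fun _ hx => hx.1.le

theorem apply_truncatedInverse (hmono : StrictMonoOn T (Iio b))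
    (hcont : ContinuousOn T (Iio b)) (hbot : Tendsto T atBot atBot)
    (h : truncatedInverse T b t < b) : T (truncatedInverse T b t) = t := by
  rcases exists_eq_or_forall_lt hcont hbot t with ⟨x, hx, rfl⟩ | h'
  · rw [truncatedInverse_apply hmono hx]
  · exact absurd (truncatedInverse_eq_of_forall_lt h') h.ne

theorem monotone_truncatedInverse (hbot : Tendsto T atBot atBot) :
    Monotone (truncatedInverse T b) := fun s _ hst =>
  csSup_le_csSup ⟨b, fun _ hx => hx.1.le⟩ (nonempty_setOf_lt_and_le hbot s)
    fun _ hx => ⟨hx.1, hx.2.trans hst⟩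

theorem continuous_truncatedInverse (hmono : StrictMonoOn T (Iio b))
    (hbot : Tendsto T atBot atBot) : Continuous (truncatedInverse T b) := by
  set ρ' : ℝ → Iic b := codRestrict _ _ (truncatedInverse_le hbot)
  have hdense : DenseRange ρ' := by
    have hne : (Iio (⊤ : Iic b)).Nonempty :=
      ⟨⟨b - 1, by simp⟩, by simp [← Subtype.coe_lt_coe]⟩
    refine Dense.mono ?_ (dense_iff_closure_eq.2 ((closure_Iio' hne).trans Iic_top))
    rintro ⟨x, hx⟩ hxb
    exact ⟨T x, Subtype.ext (truncatedInverse_apply hmono (show x < b from hxb))⟩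
  have hmono' : Monotone ρ' := fun s t hst => monotone_truncatedInverse hbot hst
  exact continuous_subtype_val.comp (hmono'.continuous_of_denseRange hdense)

theorem tendsto_truncatedInverse_atTop (hmono : StrictMonoOn T (Iio b))
    (hbot : Tendsto T atBot atBot) : Tendsto (truncatedInverse T b) atTop (𝓝 b) := by
  refine tendsto_order.2 ⟨fun c hc => ?_,
    fun c hc => .of_forall fun t => (truncatedInverse_le hbot t).trans_lt hc⟩
  obtain ⟨x, hcx, hxb⟩ := exists_between hc
  filter_upwards [eventually_ge_atTop (T x)] with t ht
  rw [← truncatedInverse_apply hmono hxb] at hcx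
  exact hcx.trans_le (monotone_truncatedInverse hbot ht)

theorem hasDerivAt_truncatedInverse_of_eq (hbot : Tendsto T atBot atBot) {s : ℝ}
    (hst : s < t) (hs : truncatedInverse T b s = b) :
    HasDerivAt (truncatedInverse T b) 0 t := by
  refine (hasDerivAt_const t b).congr_of_eventuallyEq ?_
  filter_upwards [Ioi_mem_nhds hst] with y hy
  exact le_antisymm (truncatedInverse_le hbot y)
    (hs.symm.le.trans (monotone_truncatedInverse hbot hy.le))

end TruncatedInverse

theorem tendsto_atBot_of_hasDerivAt_of_le {f f' : ℝ → ℝ} {x₀ c : ℝ} (hc : 0 < c)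
    (hf : ∀ x ≤ x₀, HasDerivAt f (f' x) x) (hle : ∀ x ≤ x₀, c ≤ f' x) :
    Tendsto f atBot atBot := by
  have hint : ∀ x ∈ interior (Iic x₀), x ≤ x₀ :=
    fun x hx => interior_subset (s := Iic x₀) hx
  have hmvt := (convex_Iic x₀).mul_sub_le_image_sub_of_le_deriv
    (fun x hx => (hf x hx).continuousAt.continuousWithinAt)
    (fun x hx => (hf x (hint x hx)).differentiableAt.differentiableWithinAt)
    (fun x hx => (hf x (hint x hx)).deriv ▸ hle x (hint x hx))
  have hbound : ∀ x ≤ x₀, c * (x₀ - x) ≤ f x₀ - f x := fun x hx =>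
    hmvt x hx x₀ self_mem_Iic hx
  have hlin : Tendsto (fun x => f x₀ + c * (x - x₀)) atBot atBot :=
    tendsto_atBot_add_const_left _ _
      ((tendsto_atBot_add_const_right _ _ tendsto_id).const_mul_atBot hc)
  refine tendsto_atBot_mono' atBot ?_ hlin
  filter_upwards [eventually_le_atBot x₀] with x hx
  linarith [hbound x hx]

theorem exists_hasDerivAt_of_continuousOn_Iio {f : ℝ → ℝ} {b x₀ : ℝ}
    (hf : ContinuousOn f (Iio b)) (hx₀ : x₀ < b) :
    ∃ T : ℝ → ℝ, T x₀ = 0 ∧ ∀ x < b, HasDerivAt T (f x) x := by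
  refine ⟨fun x => ∫ s in x₀..x, f s, intervalIntegral.integral_same, fun x hx => ?_⟩
  have hsub : uIcc x₀ x ⊆ Iio b := fun y hy => max_lt hx₀ hx |>.trans_le' hy.2
  exact intervalIntegral.integral_hasDerivAt_right ((hf.mono hsub).intervalIntegrable)
    (hf.stronglyMeasurableAtFilter isOpen_Iio x hx) (hf.continuousAt (Iio_mem_nhds hx))

section AutonomousODE

variable {F T : ℝ → ℝ} {b : ℝ}

theorem strictMonoOn_of_hasDerivAt_inv (hpos : ∀ x < b, 0 < F x)
    (hT : ∀ x < b, HasDerivAt T (F x)⁻¹ x) : StrictMonoOn T (Iio b) :=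
  strictMonoOn_of_deriv_pos (convex_Iio b)
    (fun x hx => (hT x hx).continuousAt.continuousWithinAt) fun x hx => by
      rw [interior_Iio] at hx
      rw [(hT x hx).deriv]
      exact inv_pos.2 (hpos x hx)

theorem continuousOn_of_hasDerivAt_inv (hT : ∀ x < b, HasDerivAt T (F x)⁻¹ x) :
    ContinuousOn T (Iio b) :=
  fun x hx => (hT x hx).continuousAt.continuousWithinAt

theorem hasDerivAt_truncatedInverse_of_lt (hpos : ∀ x < b, 0 < F x)
    (hT : ∀ x < b, HasDerivAt T (F x)⁻¹ x) (hbot : Tendsto T atBot atBot) {t : ℝ}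
    (ht : truncatedInverse T b t < b) :
    HasDerivAt (truncatedInverse T b) (F (truncatedInverse T b t)) t := by
  have hmono := strictMonoOn_of_hasDerivAt_inv hpos hT
  have hcont := continuousOn_of_hasDerivAt_inv hT
  have hρ := (continuous_truncatedInverse hmono hbot).continuousAt (x := t)
  have hinv : ∀ᶠ y in 𝓝 t, T (truncatedInverse T b y) = y := by
    filter_upwards [hρ.eventually (Iio_mem_nhds ht)] with y hy
    exact apply_truncatedInverse hmono hcont hbot hy
  simpa using (hT _ ht).of_local_left_inverse hρ (inv_ne_zero (hpos _ ht).ne') hinv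

theorem hasDerivAt_truncatedInverse (hF : ContinuousOn F (Iic b)) (hpos : ∀ x < b, 0 < F x)
    (hb : F b = 0) (hT : ∀ x < b, HasDerivAt T (F x)⁻¹ x) (hbot : Tendsto T atBot atBot)
    (t : ℝ) : HasDerivAt (truncatedInverse T b) (F (truncatedInverse T b t)) t := by
  set ρ := truncatedInverse T b
  have hmono := strictMonoOn_of_hasDerivAt_inv hpos hT
  have hle := truncatedInverse_le (b := b) hbot
  have hcases : ∀ t, (ρ t < b ∨ ∃ s < t, ρ s = b) → HasDerivAt ρ (F (ρ t)) t := by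
    rintro t (ht | ⟨s, hst, hs⟩)
    · exact hasDerivAt_truncatedInverse_of_lt hpos hT hbot ht
    · have hρt : ρ t = b :=
        le_antisymm (hle t) (hs.symm.le.trans (monotone_truncatedInverse hbot hst.le))
      rw [hρt, hb]
      exact hasDerivAt_truncatedInverse_of_eq hbot hst hs
  by_cases h : ρ t < b ∨ ∃ s < t, ρ s = b
  · exact hcases t h
  -- `t` is the first time at which `ρ` reaches `b`: both sides of `t` are covered above.
  push Not at h
  have hρ := continuous_truncatedInverse hmono hbot
  refine hasDerivAt_of_hasDerivAt_of_ne (fun y hy => hcases y ?_) hρ.continuousAt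
    (hF.comp_continuous hρ hle).continuousAt
  rcases hy.lt_or_gt with hyt | hty
  · exact .inl ((hle y).lt_of_ne (h.2 y hyt))
  · exact .inr ⟨t, hty, le_antisymm (hle t) h.1⟩

end AutonomousODE

theorem exists_monotone_solution_of_pos {F : ℝ → ℝ} {b x₀ : ℝ}
    (hF : ContinuousOn F (Iic b)) (hpos : ∀ x < b, 0 < F x) (hb : F b = 0)
    (hbdd : BddAbove (F '' Iic x₀)) (hx₀ : x₀ < b) :
    ∃ ρ : ℝ → ℝ, ρ 0 = x₀ ∧ (∀ t, HasDerivAt ρ (F (ρ t)) t) ∧ Monotone ρ ∧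
      Tendsto ρ atTop (𝓝 b) := by
  obtain ⟨T, hT0, hT⟩ := exists_hasDerivAt_of_continuousOn_Iio
    ((hF.mono Iio_subset_Iic_self).inv₀ fun x hx => (hpos x hx).ne') hx₀
  obtain ⟨M, hM⟩ := hbdd
  have hMpos : 0 < M := (hpos x₀ hx₀).trans_le (hM ⟨x₀, self_mem_Iic, rfl⟩)
  -- The travel time `T` grows at least at rate `1 / M`, so it is unbounded backwards.
  have hbot : Tendsto T atBot atBot :=
    tendsto_atBot_of_hasDerivAt_of_le (inv_pos.2 hMpos) (fun x hx => hT x (hx.trans_lt hx₀))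
      fun x hx => inv_anti₀ (hpos x (hx.trans_lt hx₀)) (hM ⟨x, hx, rfl⟩)
  have hmono := strictMonoOn_of_hasDerivAt_inv hpos hT
  exact ⟨truncatedInverse T b, hT0 ▸ truncatedInverse_apply hmono hx₀,
    hasDerivAt_truncatedInverse hF hpos hb hT hbot, monotone_truncatedInverse hbot,
    tendsto_truncatedInverse_atTop hmono hbot⟩

theorem exists_monotone_solution_of_pos_on_Ico {F : ℝ → ℝ} {a b x₀ : ℝ}
    (hF : ContinuousOn F (Icc a b)) (hpos : ∀ x ∈ Ico a b, 0 < F x) (hb : F b = 0)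
    (hx₀ : x₀ ∈ Ico a b) :
    ∃ ρ : ℝ → ℝ, ρ 0 = x₀ ∧ (∀ t ∈ Ici (0 : ℝ), HasDerivAt ρ (F (ρ t)) t) ∧
      Monotone ρ ∧ Tendsto ρ atTop (𝓝 b) := by
  have hab : a ≤ b := hx₀.1.trans hx₀.2.le
  -- Clamping changes nothing along the solution, which stays in `Icc x₀ b`.
  set clamp : ℝ → ℝ := fun x => max a (min b x)
  have hclamp_mem : ∀ x, clamp x ∈ Icc a b :=
    fun x => ⟨le_max_left _ _, max_le hab (min_le_left _ _)⟩
  have hclamp_eq : ∀ x ∈ Icc a b, clamp x = x := fun x hx => by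
    simp only [clamp, min_eq_right hx.2, max_eq_right hx.1]
  obtain ⟨ρ, hρ0, hρ, hmono, htend⟩ := exists_monotone_solution_of_pos (F := F ∘ clamp)
    (hF.comp_continuous (by fun_prop) hclamp_mem).continuousOn
    (fun x hx => hpos _ ⟨le_max_left _ _,
      max_lt (hx₀.1.trans_lt hx₀.2) ((min_le_right _ _).trans_lt hx)⟩)
    (by simp [clamp, hab, hb])
    ((isCompact_Icc.bddAbove_image hF).mono
      (by rintro _ ⟨x, -, rfl⟩; exact ⟨_, hclamp_mem x, rfl⟩))
    hx₀.2
  refine ⟨ρ, hρ0, fun t ht => ?_, hmono, htend⟩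
  have hρt : ρ t ∈ Icc a b :=
    ⟨hx₀.1.trans (hρ0 ▸ hmono ht), hmono.ge_of_tendsto htend t⟩
  simpa [hclamp_eq _ hρt] using hρ t

theorem exists_antitone_solution_of_neg_on_Ioc {F : ℝ → ℝ} {a b x₀ : ℝ}
    (hF : ContinuousOn F (Icc b a)) (hneg : ∀ x ∈ Ioc b a, F x < 0) (hb : F b = 0)
    (hx₀ : x₀ ∈ Ioc b a) :
    ∃ ρ : ℝ → ℝ, ρ 0 = x₀ ∧ (∀ t ∈ Ici (0 : ℝ), HasDerivAt ρ (F (ρ t)) t) ∧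
      Antitone ρ ∧ Tendsto ρ atTop (𝓝 b) := by
  obtain ⟨σ, hσ0, hσ, hmono, htend⟩ := exists_monotone_solution_of_pos_on_Ico
    (F := fun x => -F (-x)) (a := -a) (b := -b) (x₀ := -x₀)
    (hF.comp continuous_neg.continuousOn fun x hx => ⟨le_neg.1 hx.2, neg_le.1 hx.1⟩).neg
    (fun x hx => neg_pos.2 (hneg _ ⟨lt_neg.1 hx.2, neg_le.1 hx.1⟩)) (by simp [hb])
    ⟨neg_le_neg hx₀.2, neg_lt_neg hx₀.1⟩
  refine ⟨-σ, by simp [hσ0], fun t ht => by simpa using (hσ t ht).neg,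
    fun s t hst => neg_le_neg (hmono hst), by simpa [Pi.neg_def] using htend.neg⟩

theorem mul_exp_le_and_le_mul_exp_of_hasDerivAt_mul {ρ g : ℝ → ℝ} {m M : ℝ}
    (hρ : ∀ t ∈ Ici (0 : ℝ), HasDerivAt ρ (ρ t * g t) t)
    (hpos : ∀ t ∈ Ici (0 : ℝ), 0 < ρ t)
    (hg : ∀ t ∈ Ici (0 : ℝ), g t ∈ Icc m M) {t : ℝ} (ht : 0 ≤ t) :
    ρ 0 * exp (m * t) ≤ ρ t ∧ ρ t ≤ ρ 0 * exp (M * t) := by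
  have hlog : ∀ t ∈ Ici (0 : ℝ), HasDerivAt (fun t => log (ρ t)) (g t) t := fun t ht => by
    simpa [(hpos t ht).ne'] using (hρ t ht).log (hpos t ht).ne'
  have hint : ∀ t ∈ interior (Ici (0 : ℝ)), t ∈ Ici 0 := fun t ht => interior_subset ht
  have hcont : ContinuousOn (fun t => log (ρ t)) (Ici 0) :=
    fun t ht => (hlog t ht).continuousAt.continuousWithinAt
  have hdiff : DifferentiableOn ℝ (fun t => log (ρ t)) (interior (Ici 0)) :=
    fun t ht => (hlog t (hint t ht)).differentiableAt.differentiableWithinAt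
  have hlower := (convex_Ici 0).mul_sub_le_image_sub_of_le_deriv hcont hdiff
    (fun s hs => (hlog s (hint s hs)).deriv ▸ (hg s (hint s hs)).1) 0 self_mem_Ici t ht ht
  have hupper := (convex_Ici 0).image_sub_le_mul_sub_of_deriv_le hcont hdiff
    (fun s hs => (hlog s (hint s hs)).deriv ▸ (hg s (hint s hs)).2) 0 self_mem_Ici t ht ht
  have h0 := hpos 0 self_mem_Ici
  have ht' := hpos t ht
  constructor
  · calc ρ 0 * exp (m * t) = exp (log (ρ 0) + m * t) := by rw [exp_add, exp_log h0]
      _ ≤ exp (log (ρ t)) := exp_le_exp.2 (by linarith)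
      _ = ρ t := exp_log ht'
  · calc ρ t = exp (log (ρ t)) := (exp_log ht').symm
      _ ≤ exp (log (ρ 0) + M * t) := exp_le_exp.2 (by linarith)
      _ = ρ 0 * exp (M * t) := by rw [exp_add, exp_log h0]

theorem stmt12_general
    (G : ℝ → ℝ) (a ν R_s R₀ : ℝ)
    (hR₀ : 0 < R₀) (hRs : 0 < R_s)
    (hc : ContinuousOn G (Set.Ioi 0))
    (hanti : StrictAntiOn G (Set.Ioi 0))
    (hzero : G R_s = 0)
    (hbd : ∀ R ∈ Set.Ioi (0:ℝ), -ν / 3 ≤ G R ∧ G R ≤ a / 3) :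
    ∃ ρ : ℝ → ℝ, ρ 0 = R₀ ∧
      (∀ t ∈ Set.Ici (0:ℝ), 0 < ρ t) ∧
      (∀ t ∈ Set.Ici (0:ℝ), HasDerivAt ρ (ρ t * G (ρ t)) t) ∧
      (∀ t ∈ Set.Ici (0:ℝ),
        R₀ * Real.exp (-ν * t / 3) ≤ ρ t ∧ ρ t ≤ R₀ * Real.exp (a * t / 3)) ∧
      (R₀ ≤ R_s → MonotoneOn ρ (Set.Ici 0)) ∧
      (R_s ≤ R₀ → AntitoneOn ρ (Set.Ici 0)) ∧
      Filter.Tendsto ρ Filter.atTop (nhds R_s) := by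
  have hbounds : ∀ ρ : ℝ → ℝ, ρ 0 = R₀ → (∀ t ∈ Ici (0 : ℝ), 0 < ρ t) →
      (∀ t ∈ Ici (0 : ℝ), HasDerivAt ρ (ρ t * G (ρ t)) t) → ∀ t ∈ Ici (0 : ℝ),
        R₀ * exp (-ν * t / 3) ≤ ρ t ∧ ρ t ≤ R₀ * exp (a * t / 3) := by
    rintro ρ rfl hpos hρ t ht
    rw [show -ν * t / 3 = -ν / 3 * t by ring, show a * t / 3 = a / 3 * t by ring]
    exact mul_exp_le_and_le_mul_exp_of_hasDerivAt_mul hρ hpos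
      (fun t ht => hbd _ (hpos t ht)) ht
  have hF : ∀ {s}, s ⊆ Ioi 0 → ContinuousOn (fun R => R * G R) s :=
    fun hs => continuousOn_id.mul (hc.mono hs)
  rcases lt_trichotomy R₀ R_s with h | rfl | h
  · obtain ⟨ρ, hρ0, hρ, hmono, htend⟩ := exists_monotone_solution_of_pos_on_Ico
      (hF fun R hR => hR₀.trans_le hR.1)
      (fun R hR => mul_pos (hR₀.trans_le hR.1) (hzero ▸ hanti (hR₀.trans_le hR.1) hRs hR.2))
      (by simp [hzero]) ⟨le_rfl, h⟩
    have hpos : ∀ t ∈ Ici (0 : ℝ), 0 < ρ t := fun t ht => hR₀.trans_le (hρ0 ▸ hmono ht)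
    exact ⟨ρ, hρ0, hpos, hρ, hbounds ρ hρ0 hpos hρ, fun _ => hmono.monotoneOn _,
      fun h' => absurd h h'.not_gt, htend⟩
  · have hρ : ∀ t ∈ Ici (0 : ℝ), HasDerivAt (fun _ => R₀) (R₀ * G R₀) t := by
      simpa [hzero] using fun t _ => hasDerivAt_const t R₀
    exact ⟨fun _ => R₀, rfl, fun _ _ => hR₀, hρ, hbounds _ rfl (fun _ _ => hR₀) hρ,
      fun _ => monotoneOn_const, fun _ => antitoneOn_const, tendsto_const_nhds⟩
  · obtain ⟨ρ, hρ0, hρ, hanti', htend⟩ := exists_antitone_solution_of_neg_on_Ioc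
      (hF fun R hR => hRs.trans_le hR.1)
      (fun R hR => mul_neg_of_pos_of_neg (hRs.trans hR.1)
        (hzero ▸ hanti hRs (hRs.trans hR.1) hR.1))
      (by simp [hzero]) ⟨h, le_rfl⟩
    have hpos : ∀ t ∈ Ici (0 : ℝ), 0 < ρ t :=
      fun t _ => hRs.trans_le (hanti'.le_of_tendsto htend t)
    exact ⟨ρ, hρ0, hpos, hρ, hbounds ρ hρ0 hpos hρ, fun h' => absurd h h'.not_gt,
      fun _ => hanti'.antitoneOn _, htend⟩

/-- global asymptotic stability of the dormant radius R_s. -/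
theorem stmt12
    (G : ℝ → ℝ) (a ν R_s R₀ : ℝ) (hν : 0 < ν) (ha : 0 < a)
    (hR₀ : 0 < R₀) (hRs : 0 < R_s)
    (hc : ContinuousOn G (Set.Ioi 0))
    (hanti : StrictAntiOn G (Set.Ioi 0))
    (hzero : G R_s = 0)
    (hbd : ∀ R ∈ Set.Ioi (0:ℝ), -ν / 3 ≤ G R ∧ G R ≤ a / 3) :
    ∃ ρ : ℝ → ℝ, ρ 0 = R₀ ∧
      (∀ t ∈ Set.Ici (0:ℝ), 0 < ρ t) ∧
      (∀ t ∈ Set.Ici (0:ℝ), HasDerivAt ρ (ρ t * G (ρ t)) t) ∧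
      (∀ t ∈ Set.Ici (0:ℝ),
        R₀ * Real.exp (-ν * t / 3) ≤ ρ t ∧ ρ t ≤ R₀ * Real.exp (a * t / 3)) ∧
      (R₀ ≤ R_s → MonotoneOn ρ (Set.Ici 0)) ∧
      (R_s ≤ R₀ → AntitoneOn ρ (Set.Ici 0)) ∧
      Filter.Tendsto ρ Filter.atTop (nhds R_s) :=
  stmt12_general G a ν R_s R₀ hR₀ hRs hc hanti hzero hbd
end

section
/- Let c : [η,1] → ℝ be continuous with c ≥ 0, let q : (η,1) → ℝ be continuous with q > 0, β > 0, ηR ≥ 0. Suppose Σ ∈ C²((η,1)) ∩ C¹([η,1]) satisfies Σ'' + (2/s)Σ' = c(s)Σ + q(s) on (η,1), Σ'(η) = 0, Σ'(1) + βΣ(1) = 0. Then Σ(s) < 0 for all s ∈ [η,1]. -/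
open Set Filter Topology

private lemma exp_hasDerivAt (A s : ℝ) :
    HasDerivAt (fun x : ℝ => Real.exp (A * x)) (A * Real.exp (A * s)) s := by
  have h : HasDerivAt (fun x : ℝ => A * x) A s := by
    simpa using (hasDerivAt_id s).const_mul A
  simpa [mul_comm] using h.exp

private lemma no_interior_max (a b t : ℝ) (v v' : ℝ → ℝ) (v''t : ℝ)
    (ht : t ∈ Set.Ioo a b)
    (hv : ∀ s ∈ Set.Icc a b, HasDerivAt v (v' s) s)
    (hv'' : HasDerivAt v' v''t t)
    (hmax : ∀ s ∈ Set.Icc a b, v s ≤ v t)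
    (h2 : v' t = 0 → 0 < v''t) : False := by
  have htmem : t ∈ Set.Icc a b := ⟨ht.1.le, ht.2.le⟩
  have hloc : IsLocalMax v t := by
    filter_upwards [Icc_mem_nhds ht.1 ht.2] with s hs using hmax s hs
  have hvt0 : v' t = 0 := hloc.hasDerivAt_eq_zero (hv t htmem)
  have hpos := h2 hvt0
  have hslope : Filter.Tendsto (slope v' t) (𝓝[>] t) (𝓝 v''t) :=
    (hasDerivAt_iff_tendsto_slope.mp hv'').mono_left
      (nhdsWithin_mono _ fun x hx => ne_of_gt hx)
  have hev : ∀ᶠ s in 𝓝[>] t, 0 < v' s ∧ s < b := by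
    have h1 : ∀ᶠ s in 𝓝[>] t, 0 < slope v' t s :=
      hslope.eventually (eventually_gt_nhds hpos)
    have h2' : ∀ᶠ s in 𝓝[>] t, s < b :=
      (eventually_lt_nhds ht.2).filter_mono nhdsWithin_le_nhds
    filter_upwards [h1, h2', eventually_mem_nhdsWithin] with s hs1 hs2 hs3
    refine ⟨?_, hs2⟩
    have hst : (0:ℝ) < s - t := sub_pos.mpr hs3
    have hslope_eq : slope v' t s = (v' s - v' t) / (s - t) := slope_def_field v' t s
    rw [hslope_eq, hvt0, sub_zero] at hs1
    exact (div_pos_iff.mp hs1).resolve_right (fun h => absurd hst (not_lt.mpr h.2.le)) |>.1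
  obtain ⟨u, hu, hsub⟩ := mem_nhdsGT_iff_exists_Ioo_subset.mp hev
  have hu' : t < u := hu
  set m := min u b with hm
  have htm : t < m := lt_min hu' ht.2
  set p := (t + m) / 2 with hp
  have htp : t < p := by simp only [hp]; linarith
  have hpm : p < m := by simp only [hp]; linarith
  have hpb : p ≤ b := le_trans hpm.le (min_le_right u b)
  have hap : a ≤ p := le_trans ht.1.le htp.le
  have hmono : StrictMonoOn v (Set.Icc t p) := by
    apply strictMonoOn_of_deriv_pos (convex_Icc t p)
    · intro s hs
      exact (hv s ⟨le_trans ht.1.le hs.1, le_trans hs.2 hpb⟩).continuousAt.continuousWithinAt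
    · intro s hs
      rw [interior_Icc] at hs
      have hsu : s ∈ Set.Ioo t u := ⟨hs.1, lt_of_lt_of_le (hs.2.trans hpm) (min_le_left u b)⟩
      have := (hsub hsu).1
      rw [(hv s ⟨le_trans ht.1.le hs.1.le, le_trans hs.2.le hpb⟩).deriv]
      exact this
  have h1 : v t < v p := hmono ⟨le_refl t, htp.le⟩ ⟨htp.le, le_refl p⟩ htp
  have h2'' : v p ≤ v t := hmax p ⟨hap, hpb⟩
  linarith

private lemma right_deriv_nonneg (a b d : ℝ) (v : ℝ → ℝ) (hab : a < b)
    (hv : HasDerivAt v d b) (hmax : ∀ s ∈ Set.Ico a b, v s ≤ v b) : 0 ≤ d := by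
  have hslope : Filter.Tendsto (slope v b) (𝓝[<] b) (𝓝 d) :=
    (hasDerivAt_iff_tendsto_slope.mp hv).mono_left
      (nhdsWithin_mono _ fun x hx => ne_of_lt hx)
  refine ge_of_tendsto hslope ?_
  filter_upwards [eventually_mem_nhdsWithin,
    (eventually_gt_nhds hab).filter_mono nhdsWithin_le_nhds] with s hs1 hs2
  have h1 : v s - v b ≤ 0 := sub_nonpos.mpr (hmax s ⟨hs2.le, hs1⟩)
  have h2 : s - b ≤ 0 := by have : s < b := hs1; linarith
  rw [slope_def_field]
  exact div_nonneg_iff.mpr (Or.inr ⟨h1, h2⟩)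

private lemma left_deriv_nonpos (a b d : ℝ) (v : ℝ → ℝ) (hab : a < b)
    (hv : HasDerivAt v d a) (hmax : ∀ s ∈ Set.Ioc a b, v s ≤ v a) : d ≤ 0 := by
  have hslope : Filter.Tendsto (slope v a) (𝓝[>] a) (𝓝 d) :=
    (hasDerivAt_iff_tendsto_slope.mp hv).mono_left
      (nhdsWithin_mono _ fun x hx => ne_of_gt hx)
  refine le_of_tendsto hslope ?_
  filter_upwards [eventually_mem_nhdsWithin,
    (eventually_lt_nhds hab).filter_mono nhdsWithin_le_nhds] with s hs1 hs2
  have h1 : v s - v a ≤ 0 := sub_nonpos.mpr (hmax s ⟨hs1, hs2.le⟩)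
  have h2 : (0:ℝ) ≤ s - a := by have : a < s := hs1; linarith
  rw [slope_def_field]
  exact div_nonpos_iff.mpr (Or.inr ⟨h1, h2⟩)

private lemma barrier_le (p r C A ε B M : ℝ) (hpr : p < r) (hε : 0 < ε) (hB : 0 ≤ B)
    (hM : 0 ≤ M)
    (S S' S'' c q : ℝ → ℝ)
    (hS : ∀ s ∈ Set.Icc p r, HasDerivAt S (S' s) s)
    (hS' : ∀ s ∈ Set.Ioo p r, HasDerivAt S' (S'' s) s)
    (hode : ∀ s ∈ Set.Ioo p r, S'' s + (2 / s) * S' s = c s * S s + q s)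
    (hq : ∀ s ∈ Set.Ioo p r, 0 < q s)
    (hc : ∀ s ∈ Set.Ioo p r, 0 ≤ c s ∧ c s ≤ C)
    (hA : ∀ t ∈ Set.Ioo p r, 0 < A ^ 2 + 2 * A / t - C)
    (hvp : S p - M + ε * (Real.exp (A * p) - B) ≤ 0)
    (hvr : S r - M + ε * (Real.exp (A * r) - B) ≤ 0) :
    ∀ s ∈ Set.Icc p r, S s - M + ε * (Real.exp (A * s) - B) ≤ 0 := by
  set v : ℝ → ℝ := fun s => S s - M + ε * (Real.exp (A * s) - B) with hv_def
  set v' : ℝ → ℝ := fun s => S' s + ε * (A * Real.exp (A * s)) with hv'_def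
  have hvd : ∀ s ∈ Set.Icc p r, HasDerivAt v (v' s) s := fun s hs =>
    ((hS s hs).sub_const M).add (((exp_hasDerivAt A s).sub_const B).const_mul ε)
  by_contra hcon
  push_neg at hcon
  obtain ⟨s₁, hs₁, hpos₁⟩ := hcon
  have hvc : ContinuousOn v (Set.Icc p r) := fun s hs =>
    (hvd s hs).continuousAt.continuousWithinAt
  obtain ⟨t, htmem, htmax⟩ :=
    isCompact_Icc.exists_isMaxOn (Set.nonempty_Icc.mpr hpr.le) hvc
  have hmax : ∀ s ∈ Set.Icc p r, v s ≤ v t := fun s hs => htmax hs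
  have hvtpos : 0 < v t := lt_of_lt_of_le hpos₁ (hmax s₁ hs₁)
  have htp : p < t := by
    rcases eq_or_lt_of_le htmem.1 with h | h
    · exfalso; rw [← h] at hvtpos; simp only [hv_def] at hvtpos; linarith
    · exact h
  have htr : t < r := by
    rcases eq_or_lt_of_le htmem.2 with h | h
    · exfalso; rw [h] at hvtpos; simp only [hv_def] at hvtpos; linarith
    · exact h
  refine no_interior_max p r t v v' (S'' t + ε * (A * (A * Real.exp (A * t))))
    ⟨htp, htr⟩ hvd ?_ hmax ?_
  · exact (hS' t ⟨htp, htr⟩).add (((exp_hasDerivAt A t).const_mul A).const_mul ε)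
  · intro hv't
    have hode' := hode t ⟨htp, htr⟩
    have hq' := hq t ⟨htp, htr⟩
    obtain ⟨hc0, hcC⟩ := hc t ⟨htp, htr⟩
    have hA' := hA t ⟨htp, htr⟩
    have hE : 0 < Real.exp (A * t) := Real.exp_pos _
    have hS't : S' t = -(ε * (A * Real.exp (A * t))) := by
      have h0 : S' t + ε * (A * Real.exp (A * t)) = 0 := hv't
      linarith
    have hvt : 0 < S t - M + ε * (Real.exp (A * t) - B) := hvtpos
    have hSt : -(ε * Real.exp (A * t)) ≤ S t := by
      nlinarith [mul_nonneg hε.le hB]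
    have hcS : -(C * (ε * Real.exp (A * t))) ≤ c t * S t := by
      nlinarith [mul_nonneg hc0 (by linarith : (0:ℝ) ≤ S t + ε * Real.exp (A * t)),
        mul_le_mul_of_nonneg_right hcC (by positivity : (0:ℝ) ≤ ε * Real.exp (A * t))]
    have hkey : 0 < (ε * Real.exp (A * t)) * (A ^ 2 + 2 * A / t - C) :=
      mul_pos (by positivity) hA'
    have hS'' : S'' t = c t * S t + q t - (2 / t) * S' t := by linarith
    rw [hS'', hS't]
    have hid : c t * S t + q t - 2 / t * -(ε * (A * Real.exp (A * t))) +
        ε * (A * (A * Real.exp (A * t))) =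
        (c t * S t + C * (ε * Real.exp (A * t))) + q t +
        ε * Real.exp (A * t) * (A ^ 2 + 2 * A / t - C) := by ring
    linarith [hcS, hq', hkey, hid.ge, hid.le]

private lemma div_two_mul_aux (X D : ℝ) (hD : D ≠ 0) : X / (2 * D) * D = X / 2 := by
  field_simp

set_option maxHeartbeats 1000000 in
/-- maximum-principle lemma: Σ < 0 on [η,1]. -/
theorem stmt18
    (η β : ℝ) (hη0 : 0 ≤ η) (hη1 : η < 1) (hβ : 0 < β)
    (c q : ℝ → ℝ)
    (hcc : ContinuousOn c (Set.Icc η 1))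
    (hcnonneg : ∀ s ∈ Set.Icc η 1, 0 ≤ c s)
    (hqc : ContinuousOn q (Set.Ioo η 1))
    (hqpos : ∀ s ∈ Set.Ioo η 1, 0 < q s)
    (S S' S'' : ℝ → ℝ)
    (hS : ∀ s ∈ Set.Icc η 1, HasDerivAt S (S' s) s)
    (hS'cont : ContinuousOn S' (Set.Icc η 1))
    (hS' : ∀ s ∈ Set.Ioo η 1, HasDerivAt S' (S'' s) s)
    (hode : ∀ s ∈ Set.Ioo η 1, S'' s + (2 / s) * S' s = c s * S s + q s)
    (hbcη : S' η = 0)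
    (hbc1 : S' 1 + β * S 1 = 0) :
    ∀ s ∈ Set.Icc η 1, S s < 0 := by
  have hScont : ContinuousOn S (Set.Icc η 1) := fun s hs =>
    (hS s hs).continuousAt.continuousWithinAt
  obtain ⟨s₀, hs₀mem, hs₀max⟩ :=
    isCompact_Icc.exists_isMaxOn (Set.nonempty_Icc.mpr hη1.le) hScont
  have hmax : ∀ s ∈ Set.Icc η 1, S s ≤ S s₀ := fun s hs => hs₀max hs
  set M := S s₀ with hMdef
  intro s hs
  by_contra hcon
  push_neg at hcon
  have hM : 0 ≤ M := le_trans hcon (hmax s hs)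
  obtain ⟨t₀, ht₀, hct₀⟩ :=
    isCompact_Icc.exists_isMaxOn (Set.nonempty_Icc.mpr hη1.le) hcc
  set C := c t₀ with hCdef
  have hC0 : 0 ≤ C := hcnonneg t₀ ht₀
  have hCb : ∀ u ∈ Set.Icc η 1, c u ≤ C := fun u hu => hct₀ hu
  -- no interior point attains the max M
  have hnint : ∀ t ∈ Set.Ioo η 1, S t < M := by
    intro t ht
    rcases lt_or_eq_of_le (hmax t ⟨ht.1.le, ht.2.le⟩) with h | h
    · exact h
    exfalso
    refine no_interior_max η 1 t S S' (S'' t) ht hS (hS' t ht)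
      (fun u hu => (hmax u hu).trans h.ge) ?_
    intro h0
    have hode' := hode t ht
    have hq' := hqpos t ht
    have hc' := hcnonneg t ⟨ht.1.le, ht.2.le⟩
    have h1 : (2 / t) * S' t = 0 := by rw [h0]; ring
    have h2 : S'' t = c t * S t + q t := by linarith
    rw [h2, h]
    nlinarith [mul_nonneg hc' hM]
  set b₀ := (η + 1) / 2 with hb₀def
  have hηb₀ : η < b₀ := by simp only [hb₀def]; linarith
  have hb₀1 : b₀ < 1 := by simp only [hb₀def]; linarith
  have hb₀pos : 0 < b₀ := lt_of_le_of_lt hη0 hηb₀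
  have hSb₀ : S b₀ < M := hnint b₀ ⟨hηb₀, hb₀1⟩
  have hs₀end : s₀ = η ∨ s₀ = 1 := by
    rcases eq_or_lt_of_le hs₀mem.1 with h | h
    · exact Or.inl h.symm
    rcases eq_or_lt_of_le hs₀mem.2 with h' | h'
    · exact Or.inr h'
    exact absurd (hnint s₀ ⟨h, h'⟩) (lt_irrefl _)
  rcases hs₀end with h₀ | h₀
  · -- max at the left endpoint η ; barrier with A = C + 1 > 0
    have hSη : S η = M := by rw [hMdef, h₀]
    set A := C + 1 with hAdef
    have hApos : 0 < A := by linarith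
    have hD : 0 < Real.exp (A * b₀) - Real.exp (A * η) := by
      have hlt : A * η < A * b₀ := by nlinarith
      have := Real.exp_lt_exp.mpr hlt
      linarith
    set ε := (M - S b₀) / (2 * (Real.exp (A * b₀) - Real.exp (A * η))) with hεdef
    have hεpos : 0 < ε := by
      apply div_pos (by linarith) (by linarith)
    have hεD : ε * (Real.exp (A * b₀) - Real.exp (A * η)) = (M - S b₀) / 2 := by
      rw [hεdef]; exact div_two_mul_aux _ _ (ne_of_gt hD)
    have hvη : S η - M + ε * (Real.exp (A * η) - Real.exp (A * η)) ≤ 0 := by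
      have h00 : S η - M + ε * (Real.exp (A * η) - Real.exp (A * η)) = S η - M := by ring
      rw [h00]; linarith [hmax η ⟨le_refl η, hη1.le⟩]
    have hvb₀ : S b₀ - M + ε * (Real.exp (A * b₀) - Real.exp (A * η)) ≤ 0 := by
      rw [hεD]; linarith
    have hA' : ∀ t ∈ Set.Ioo η b₀, 0 < A ^ 2 + 2 * A / t - C := by
      intro t ht
      have ht0 : 0 < t := lt_of_le_of_lt hη0 ht.1
      have hpos2 : 0 < 2 * A / t := by positivity
      nlinarith [sq_nonneg C]
    have hble := barrier_le η b₀ C A ε (Real.exp (A * η)) M hηb₀ hεpos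
      (Real.exp_pos _).le hM S S' S'' c q
      (fun u hu => hS u ⟨hu.1, le_trans hu.2 hb₀1.le⟩)
      (fun u hu => hS' u ⟨hu.1, lt_trans hu.2 hb₀1⟩)
      (fun u hu => hode u ⟨hu.1, lt_trans hu.2 hb₀1⟩)
      (fun u hu => hqpos u ⟨hu.1, lt_trans hu.2 hb₀1⟩)
      (fun u hu => ⟨hcnonneg u ⟨hu.1.le, le_trans hu.2.le hb₀1.le⟩,
        hCb u ⟨hu.1.le, le_trans hu.2.le hb₀1.le⟩⟩)
      hA' hvη hvb₀
    have hdη : HasDerivAt (fun u => S u - M + ε * (Real.exp (A * u) - Real.exp (A * η)))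
        (S' η + ε * (A * Real.exp (A * η))) η :=
      ((hS η ⟨le_refl _, hη1.le⟩).sub_const M).add
        (((exp_hasDerivAt A η).sub_const _).const_mul ε)
    have hvη0 : S η - M + ε * (Real.exp (A * η) - Real.exp (A * η)) = 0 := by
      rw [hSη]; ring
    have hle := left_deriv_nonpos η b₀ _ _ hηb₀ hdη (by
      intro u hu
      have := hble u ⟨hu.1.le, hu.2⟩
      show S u - M + ε * (Real.exp (A * u) - Real.exp (A * η)) ≤
        S η - M + ε * (Real.exp (A * η) - Real.exp (A * η))
      linarith [hvη0])
    have hpos3 : 0 < ε * (A * Real.exp (A * η)) := by positivity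
    rw [hbcη] at hle
    linarith
  · -- max at the right endpoint 1 ; barrier with A = -(2/b₀ + C + 1)
    have hS1 : S 1 = M := by rw [hMdef, h₀]
    obtain ⟨α, hαdef⟩ : ∃ x : ℝ, x = 2 / b₀ + C + 1 := ⟨_, rfl⟩
    have hu2 : 0 < 2 / b₀ := by positivity
    have hα1 : 1 ≤ α := by rw [hαdef]; linarith
    obtain ⟨A, hAdef⟩ : ∃ x : ℝ, x = -α := ⟨_, rfl⟩
    have hD : 0 < Real.exp (A * b₀) - Real.exp (A * 1) := by
      have hlt : A * 1 < A * b₀ := by rw [hAdef]; nlinarith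
      have := Real.exp_lt_exp.mpr hlt
      linarith
    obtain ⟨ε, hεdef⟩ :
        ∃ x : ℝ, x = (M - S b₀) / (2 * (Real.exp (A * b₀) - Real.exp (A * 1))) := ⟨_, rfl⟩
    have hεpos : 0 < ε := by
      rw [hεdef]; apply div_pos (by linarith) (by linarith)
    have hεD : ε * (Real.exp (A * b₀) - Real.exp (A * 1)) = (M - S b₀) / 2 := by
      rw [hεdef]; exact div_two_mul_aux _ _ (ne_of_gt hD)
    have hvb₀ : S b₀ - M + ε * (Real.exp (A * b₀) - Real.exp (A * 1)) ≤ 0 := by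
      rw [hεD]; linarith
    have hv1 : S 1 - M + ε * (Real.exp (A * 1) - Real.exp (A * 1)) ≤ 0 := by
      have h00 : S 1 - M + ε * (Real.exp (A * 1) - Real.exp (A * 1)) = S 1 - M := by ring
      rw [h00]; linarith [hmax 1 ⟨hη1.le, le_refl (1:ℝ)⟩]
    have hA' : ∀ t ∈ Set.Ioo b₀ 1, 0 < A ^ 2 + 2 * A / t - C := by
      intro t ht
      have ht0 : 0 < t := lt_trans hb₀pos ht.1
      have hdiv : 2 * α / t ≤ 2 * α / b₀ := by
        apply div_le_div_of_nonneg_left (by linarith) hb₀pos ht.1.le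
      have hid : A ^ 2 + 2 * A / t - C = α ^ 2 - 2 * α / t - C := by
        rw [hAdef]; ring
      rw [hid]
      have hkey : 0 < α ^ 2 - 2 * α / b₀ - C := by
        rw [hαdef]
        have h2 : 2 * (2 / b₀ + C + 1) / b₀ = (2 / b₀) * (2 / b₀ + C + 1) := by ring
        rw [h2]
        nlinarith [sq_nonneg C, mul_nonneg hu2.le hC0, hu2, hC0]
      linarith
    have hble := barrier_le b₀ 1 C A ε (Real.exp (A * 1)) M hb₀1 hεpos
      (Real.exp_pos _).le hM S S' S'' c q
      (fun u hu => hS u ⟨le_trans hηb₀.le hu.1, hu.2⟩)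
      (fun u hu => hS' u ⟨lt_of_lt_of_le hηb₀ hu.1.le, hu.2⟩)
      (fun u hu => hode u ⟨lt_of_lt_of_le hηb₀ hu.1.le, hu.2⟩)
      (fun u hu => hqpos u ⟨lt_of_lt_of_le hηb₀ hu.1.le, hu.2⟩)
      (fun u hu => ⟨hcnonneg u ⟨le_trans hηb₀.le hu.1.le, hu.2.le⟩,
        hCb u ⟨le_trans hηb₀.le hu.1.le, hu.2.le⟩⟩)
      hA' hvb₀ hv1
    have hd1 : HasDerivAt (fun u => S u - M + ε * (Real.exp (A * u) - Real.exp (A * 1)))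
        (S' 1 + ε * (A * Real.exp (A * 1))) 1 :=
      ((hS 1 ⟨hη1.le, le_refl _⟩).sub_const M).add
        (((exp_hasDerivAt A 1).sub_const _).const_mul ε)
    have hv10 : S 1 - M + ε * (Real.exp (A * 1) - Real.exp (A * 1)) = 0 := by
      rw [hS1]; ring
    have hge := right_deriv_nonneg b₀ 1 _ _ hb₀1 hd1 (by
      intro u hu
      have := hble u ⟨hu.1, hu.2.le⟩
      show S u - M + ε * (Real.exp (A * u) - Real.exp (A * 1)) ≤
        S 1 - M + ε * (Real.exp (A * 1) - Real.exp (A * 1))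
      linarith [hv10])
    have hS'1 : S' 1 = -(β * M) := by rw [← hS1]; linarith
    have hneg : ε * (A * Real.exp (A * 1)) < 0 := by
      have hE := Real.exp_pos (A * 1)
      have hA0 : A < 0 := by rw [hAdef]; linarith
      nlinarith [mul_pos hεpos (mul_pos (neg_pos.mpr hA0) hE)]
    have hβM : 0 ≤ β * M := mul_nonneg hβ.le hM
    rw [hS'1] at hge
    linarith
end

section
/- Let c : [η,1] → [0,∞) be continuous, β̃ > 0, and suppose v ∈ C²((η,1)) ∩ C¹([η,1]) satisfies v'' + (2/s)v' = c(s) v on (η,1), v'(η) = −B with B > 0, and v'(1) + β̃ v(1) = 0. Then v(s) > 0 for all s ∈ [η,1]. -/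
open Set Filter Topology
open MeasureTheory intervalIntegral

lemma stmt19_w (η : ℝ) (hη0 : 0 ≤ η)
    (c : ℝ → ℝ) (v v' v'' : ℝ → ℝ)
    (hv' : ∀ s ∈ Set.Ioo η 1, HasDerivAt v' (v'' s) s)
    (hode : ∀ s ∈ Set.Ioo η 1, v'' s + (2 / s) * v' s = c s * v s) :
    ∀ s ∈ Set.Ioo η 1, HasDerivAt (fun t => t ^ 2 * v' t) (s ^ 2 * (c s * v s)) s := by
  intro s hs
  have hs0 : 0 < s := lt_of_le_of_lt hη0 hs.1
  have h1 : HasDerivAt (fun t : ℝ => t ^ 2) (2 * s) s := by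
    simpa using hasDerivAt_pow 2 s
  have h2 := h1.mul (hv' s hs)
  have heq : 2 * s * v' s + s ^ 2 * v'' s = s ^ 2 * (c s * v s) := by
    have h3 := hode s hs
    have hvs : v'' s = c s * v s - 2 / s * v' s := by linarith
    rw [hvs]
    field_simp
    ring
  rwa [heq] at h2

lemma stmt19_energy (η p : ℝ) (hη0 : 0 ≤ η) (hp : η ≤ p) (hp1 : p ≤ 1)
    (c : ℝ → ℝ) (hcc : ContinuousOn c (Set.Icc η 1))
    (v v' v'' : ℝ → ℝ)
    (hv : ∀ s ∈ Set.Icc η 1, HasDerivAt v (v' s) s)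
    (hv'cont : ContinuousOn v' (Set.Icc η 1))
    (hv' : ∀ s ∈ Set.Ioo η 1, HasDerivAt v' (v'' s) s)
    (hode : ∀ s ∈ Set.Ioo η 1, v'' s + (2 / s) * v' s = c s * v s) :
    ∫ s in p..1, (s ^ 2 * c s * (v s) ^ 2 + s ^ 2 * (v' s) ^ 2)
      = v' 1 * v 1 - p ^ 2 * v' p * v p := by
  have hvc : ContinuousOn v (Set.Icc η 1) := fun s hs =>
    (hv s hs).continuousAt.continuousWithinAt
  have hsub : Set.Icc p 1 ⊆ Set.Icc η 1 := Set.Icc_subset_Icc hp le_rfl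
  have hssub : Set.Ioo p 1 ⊆ Set.Ioo η 1 := Set.Ioo_subset_Ioo hp le_rfl
  have hGc : ContinuousOn (fun s => s ^ 2 * c s * (v s) ^ 2 + s ^ 2 * (v' s) ^ 2)
      (Set.Icc p 1) := by
    apply ContinuousOn.add
    · exact (((continuous_pow 2).continuousOn.mul (hcc.mono hsub)).mul
        (((hvc.mono hsub)).pow 2))
    · exact ((continuous_pow 2).continuousOn.mul ((hv'cont.mono hsub).pow 2))
  have hFderiv : ∀ s ∈ Set.Ioo p 1,
      HasDerivAt (fun t => (t ^ 2 * v' t) * v t)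
        (s ^ 2 * c s * (v s) ^ 2 + s ^ 2 * (v' s) ^ 2) s := by
    intro s hs
    have hw := stmt19_w η hη0 c v v' v'' hv' hode s (hssub hs)
    have h2 := hw.mul (hv s (hsub (Set.Ioo_subset_Icc_self hs)))
    have : s ^ 2 * (c s * v s) * v s + s ^ 2 * v' s * v' s
        = s ^ 2 * c s * (v s) ^ 2 + s ^ 2 * (v' s) ^ 2 := by ring
    rwa [this] at h2
  have hFc : ContinuousOn (fun t => (t ^ 2 * v' t) * v t) (Set.Icc p 1) :=
    ((continuous_pow 2).continuousOn.mul (hv'cont.mono hsub)).mul (hvc.mono hsub)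
  have hint : IntervalIntegrable
      (fun s => s ^ 2 * c s * (v s) ^ 2 + s ^ 2 * (v' s) ^ 2) volume p 1 :=
    (hGc.mono (by rw [Set.uIcc_of_le hp1])).intervalIntegrable
  have := integral_eq_sub_of_hasDerivAt_of_le hp1 hFc hFderiv hint
  rw [this]; ring

lemma stmt19_pos (η p : ℝ) (hη0 : 0 ≤ η) (hp : η ≤ p) (hp1 : p < 1)
    (c : ℝ → ℝ) (hcc : ContinuousOn c (Set.Icc η 1))
    (hcnonneg : ∀ s ∈ Set.Icc η 1, 0 ≤ c s)
    (v v' : ℝ → ℝ)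
    (hvc : ContinuousOn v (Set.Icc η 1))
    (hv'cont : ContinuousOn v' (Set.Icc η 1))
    (hvp : v' p ≠ 0) :
    0 < ∫ s in p..1, (s ^ 2 * c s * (v s) ^ 2 + s ^ 2 * (v' s) ^ 2) := by
  set G : ℝ → ℝ := fun s => s ^ 2 * c s * (v s) ^ 2 + s ^ 2 * (v' s) ^ 2 with hG
  have hGc : ContinuousOn G (Set.Icc η 1) := by
    apply ContinuousOn.add
    · exact ((continuous_pow 2).continuousOn.mul hcc).mul (hvc.pow 2)
    · exact (continuous_pow 2).continuousOn.mul (hv'cont.pow 2)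
  have hGnonneg : ∀ s ∈ Set.Icc η 1, 0 ≤ G s := by
    intro s hs
    have := hcnonneg s hs
    have hs0 : 0 ≤ s := le_trans hη0 hs.1
    positivity
  have hpI : p ∈ Set.Icc η 1 := ⟨hp, hp1.le⟩
  -- find q ∈ (p, 1] with v' ≠ 0 on [p,q]
  have hcw : ContinuousWithinAt v' (Set.Icc η 1) p := hv'cont p hpI
  have heps : ∀ᶠ s in nhdsWithin p (Set.Icc η 1), |v' s - v' p| < |v' p| / 2 := by
    have hmem : Metric.ball (v' p) (|v' p| / 2) ∈ nhds (v' p) :=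
      Metric.ball_mem_nhds _ (by positivity)
    filter_upwards [hcw hmem] with s hs
    simpa [Real.dist_eq] using hs
  rw [eventually_nhdsWithin_iff, Metric.eventually_nhds_iff] at heps
  obtain ⟨δ, hδ0, hδ⟩ := heps
  set q : ℝ := min (p + δ / 2) 1 with hq
  have hpq : p < q := lt_min (by linarith) hp1
  have hq1 : q ≤ 1 := min_le_right _ _
  have hqsub : Set.Icc p q ⊆ Set.Icc η 1 := Set.Icc_subset_Icc hp hq1
  have hne : ∀ s ∈ Set.Ioo p q, v' s ≠ 0 := by
    intro s hs
    have hsq : s ∈ Set.Icc η 1 := hqsub ⟨hs.1.le, hs.2.le⟩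
    have hd : dist s p < δ := by
      rw [Real.dist_eq, abs_of_pos (by linarith [hs.1] : (0:ℝ) < s - p)]
      have : s < p + δ / 2 := lt_of_lt_of_le hs.2 (min_le_left _ _)
      linarith
    have := hδ hd hsq
    intro h0
    rw [h0] at this
    simp only [zero_sub, abs_neg] at this
    have := abs_pos.mpr hvp
    linarith
  have hGposq : ∀ s ∈ Set.Ioo p q, 0 < G s := by
    intro s hs
    have hsq : s ∈ Set.Icc η 1 := hqsub ⟨hs.1.le, hs.2.le⟩
    have hc := hcnonneg s hsq
    have hs0 : 0 < s := lt_of_le_of_lt (le_trans hη0 hp) hs.1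
    have hv0 := hne s hs
    have h1 : 0 < s ^ 2 * (v' s) ^ 2 := by positivity
    have h2 : 0 ≤ s ^ 2 * c s * (v s) ^ 2 := by positivity
    simp only [hG]
    linarith
  have hint1 : IntervalIntegrable G volume p q :=
    ((hGc.mono hqsub).mono (by rw [Set.uIcc_of_le hpq.le])).intervalIntegrable
  have hint2 : IntervalIntegrable G volume q 1 :=
    ((hGc.mono (Set.Icc_subset_Icc (le_trans hp hpq.le) le_rfl)).mono
      (by rw [Set.uIcc_of_le hq1])).intervalIntegrable
  have hsplit : ∫ s in p..1, G s = (∫ s in p..q, G s) + ∫ s in q..1, G s :=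
    (integral_add_adjacent_intervals hint1 hint2).symm
  have h1 : 0 < ∫ s in p..q, G s := intervalIntegral_pos_of_pos_on hint1 hGposq hpq
  have h2 : 0 ≤ ∫ s in q..1, G s := by
    apply intervalIntegral.integral_nonneg hq1
    intro u hu
    exact hGnonneg u (Set.Icc_subset_Icc (le_trans hp hpq.le) le_rfl hu)
  rw [hsplit]; linarith

lemma stmt19_bracket (s a' C K x y cs : ℝ) (ha'0 : 0 < a') (hs : a' ≤ s)
    (hs1 : s ≤ 1) (hc0 : 0 ≤ cs) (hcC : cs ≤ C)
    (hK : K = 1 / a' ^ 2 + C + 1) :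
    0 ≤ 2 * x * y + 2 * (s ^ 2 * y) * (s ^ 2 * (cs * x)) + K * (x ^ 2 + (s ^ 2 * y) ^ 2) := by
  have hs0 : 0 < s := lt_of_lt_of_le ha'0 hs
  have hKs : 1 + s ^ 4 * cs ≤ K * s ^ 2 := by
    have ha2 : a' ^ 2 ≤ s ^ 2 := by nlinarith
    have h1 : 1 ≤ 1 / a' ^ 2 * s ^ 2 := by
      rw [div_mul_eq_mul_div, one_mul, le_div_iff₀ (by positivity)]
      nlinarith
    have h2 : s ^ 4 * cs ≤ C * s ^ 2 := by
      have e1 : s ^ 4 ≤ s ^ 2 := by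
        have hs2 : s ^ 2 ≤ 1 := by nlinarith
        nlinarith [mul_le_mul_of_nonneg_right hs2 (sq_nonneg s)]
      have e2 : s ^ 4 * cs ≤ s ^ 2 * cs := mul_le_mul_of_nonneg_right e1 hc0
      have e3 : s ^ 2 * cs ≤ s ^ 2 * C := mul_le_mul_of_nonneg_left hcC (sq_nonneg s)
      nlinarith
    have h3 : K * s ^ 2 = 1 / a' ^ 2 * s ^ 2 + C * s ^ 2 + s ^ 2 := by rw [hK]; ring
    nlinarith [sq_nonneg s]
  have hkey : 0 ≤ s ^ 2 * (2 * x * y + 2 * (s ^ 2 * y) * (s ^ 2 * (cs * x))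
      + K * (x ^ 2 + (s ^ 2 * y) ^ 2)) := by
    nlinarith [mul_nonneg (by positivity : (0:ℝ) ≤ 1 + s ^ 4 * cs) (sq_nonneg (x + s ^ 2 * y)),
      mul_nonneg (sub_nonneg.mpr hKs) (add_nonneg (sq_nonneg x) (sq_nonneg (s ^ 2 * y)))]
  exact le_of_mul_le_mul_left (by simpa using hkey) (by positivity : (0:ℝ) < s ^ 2)

/-- maximum-principle lemma: v > 0 on [η,1] when v'(η) = −B < 0
and v satisfies a homogeneous Robin condition at the outer boundary. -/
theorem stmt19
    (η βt B : ℝ) (hη0 : 0 ≤ η) (hη1 : η < 1) (hβ : 0 < βt) (hB : 0 < B)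
    (c : ℝ → ℝ)
    (hcc : ContinuousOn c (Set.Icc η 1))
    (hcnonneg : ∀ s ∈ Set.Icc η 1, 0 ≤ c s)
    (v v' v'' : ℝ → ℝ)
    (hv : ∀ s ∈ Set.Icc η 1, HasDerivAt v (v' s) s)
    (hv'cont : ContinuousOn v' (Set.Icc η 1))
    (hv' : ∀ s ∈ Set.Ioo η 1, HasDerivAt v' (v'' s) s)
    (hode : ∀ s ∈ Set.Ioo η 1, v'' s + (2 / s) * v' s = c s * v s)
    (hbcη : v' η = -B)
    (hbc1 : v' 1 + βt * v 1 = 0) :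
    ∀ s ∈ Set.Icc η 1, 0 < v s := by
  have hvc : ContinuousOn v (Set.Icc η 1) := fun s hs =>
    (hv s hs).continuousAt.continuousWithinAt
  have hv'1 : v' 1 = -(βt * v 1) := by linarith
  have hGnonneg : ∀ s ∈ Set.Icc η 1, 0 ≤ s ^ 2 * c s * (v s) ^ 2 + s ^ 2 * (v' s) ^ 2 := by
    intro s hs
    have := hcnonneg s hs
    positivity
  -- Step 1: v η > 0 (and η > 0)
  have hE := stmt19_energy η η hη0 le_rfl hη1.le c hcc v v' v'' hv hv'cont hv' hode
  have hP := stmt19_pos η η hη0 le_rfl hη1 c hcc hcnonneg v v' hvc hv'cont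
    (by rw [hbcη]; exact neg_ne_zero.mpr hB.ne')
  rw [hE, hbcη, hv'1] at hP
  have hvηpos : 0 < v η := by
    by_contra hcon
    push_neg at hcon
    have h1 : η ^ 2 * (B * v η) ≤ 0 :=
      mul_nonpos_of_nonneg_of_nonpos (sq_nonneg η)
        (mul_nonpos_of_nonneg_of_nonpos hB.le hcon)
    nlinarith [sq_nonneg (v 1)]
  -- Main contradiction argument
  by_contra hcon
  push_neg at hcon
  obtain ⟨t, htI, htle⟩ := hcon
  set S : Set ℝ := Set.Icc η 1 ∩ v ⁻¹' (Set.Iic 0) with hS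
  have hSne : S.Nonempty := ⟨t, htI, htle⟩
  have hSclosed : IsClosed S :=
    hvc.preimage_isClosed_of_isClosed isClosed_Icc isClosed_Iic
  have hSbdd : BddBelow S := ⟨η, fun s hs => hs.1.1⟩
  set a := sInf S with ha
  have haS : a ∈ S := hSclosed.csInf_mem hSne hSbdd
  have haI : a ∈ Set.Icc η 1 := haS.1
  have hva_le : v a ≤ 0 := haS.2
  have hlt : ∀ s ∈ Set.Ico η a, 0 < v s := by
    intro s hs
    by_contra hcon2
    push_neg at hcon2
    have hsS : s ∈ S := ⟨⟨hs.1, (lt_of_lt_of_le hs.2 haI.2).le⟩, hcon2⟩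
    exact absurd (csInf_le hSbdd hsS) (not_le.mpr hs.2)
  have hηa : η < a := by
    rcases lt_or_eq_of_le haI.1 with h | h
    · exact h
    · exact absurd hva_le (by rw [← h]; exact not_le.mpr hvηpos)
  have hva : v a = 0 := by
    refine le_antisymm hva_le ?_
    have hcl : a ∈ closure (Set.Ico η a) := by
      rw [closure_Ico hηa.ne]
      exact ⟨hηa.le, le_rfl⟩
    have hne : (nhdsWithin a (Set.Ico η a)).NeBot :=
      mem_closure_iff_nhdsWithin_neBot.mp hcl
    have htd : Tendsto v (nhdsWithin a (Set.Ico η a)) (nhds (v a)) :=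
      (hvc a haI).mono (fun s hs => ⟨hs.1, hs.2.le.trans haI.2⟩)
    refine ge_of_tendsto htd ?_
    filter_upwards [self_mem_nhdsWithin] with s hs using (hlt s hs).le
  -- energy on [a,1] : v 1 = 0, integral = 0, v' a = 0
  have hEa := stmt19_energy η a hη0 haI.1 haI.2 c hcc v v' v'' hv hv'cont hv' hode
  rw [hv'1, hva] at hEa
  have hInonneg : 0 ≤ ∫ s in a..1, (s ^ 2 * c s * (v s) ^ 2 + s ^ 2 * (v' s) ^ 2) :=
    intervalIntegral.integral_nonneg haI.2
      (fun u hu => hGnonneg u ⟨le_trans haI.1 hu.1, hu.2⟩)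
  have h0 : 0 ≤ -(βt * v 1) * v 1 := by
    rw [hEa, mul_zero, sub_zero] at hInonneg
    exact hInonneg
  have hv1 : v 1 = 0 := by
    have h2 : v 1 * v 1 ≤ 0 := by nlinarith
    exact mul_self_eq_zero.mp (le_antisymm h2 (mul_self_nonneg _))
  have hIzero : ∫ s in a..1, (s ^ 2 * c s * (v s) ^ 2 + s ^ 2 * (v' s) ^ 2) = 0 := by
    rw [hEa, hv1]; ring
  have hv'a : v' a = 0 := by
    by_contra hne0
    rcases lt_or_eq_of_le haI.2 with h1 | h1
    · have := stmt19_pos η a hη0 haI.1 h1 c hcc hcnonneg v v' hvc hv'cont hne0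
      rw [hIzero] at this
      exact lt_irrefl 0 this
    · exact hne0 (by rw [h1, hv'1, hv1]; ring)
  -- Gronwall argument on [a', a]
  obtain ⟨C, hC⟩ := isCompact_Icc.exists_bound_of_continuousOn hcc
  have hC0 : 0 ≤ C := le_trans (norm_nonneg _) (hC η ⟨le_rfl, hη1.le⟩)
  have hcle : ∀ s ∈ Set.Icc η 1, c s ≤ C := fun s hs =>
    le_trans (le_abs_self _) (hC s hs)
  set a' : ℝ := (η + a) / 2 with ha'
  have ha'η : η < a' := by simp only [ha']; linarith
  have ha'a : a' < a := by simp only [ha']; linarith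
  have ha'0 : 0 < a' := by simp only [ha']; linarith
  set K : ℝ := 1 / a' ^ 2 + C + 1 with hK
  set w : ℝ → ℝ := fun s => s ^ 2 * v' s with hw
  set g : ℝ → ℝ := fun s => (v s) ^ 2 + (w s) ^ 2 with hg
  set F : ℝ → ℝ := fun s => g s * Real.exp (K * s) with hF
  have hIccsub : Set.Icc a' a ⊆ Set.Icc η 1 := Set.Icc_subset_Icc ha'η.le haI.2
  have hIoosub : Set.Ioo a' a ⊆ Set.Ioo η 1 := fun s hs =>
    ⟨lt_trans ha'η hs.1, lt_of_lt_of_le hs.2 haI.2⟩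
  have hFderiv : ∀ s ∈ Set.Ioo a' a, HasDerivAt F
      ((2 * v s * v' s + 2 * w s * (s ^ 2 * (c s * v s))) * Real.exp (K * s)
        + g s * (Real.exp (K * s) * K)) s := by
    intro s hs
    have hs1 : s ∈ Set.Ioo η 1 := hIoosub hs
    have hsI : s ∈ Set.Icc η 1 := Set.Ioo_subset_Icc_self hs1
    have hg1 : HasDerivAt (fun t => (v t) ^ 2) (2 * v s * v' s) s := by
      have := (hv s hsI).pow 2
      norm_num at this
      exact this
    have hwd := stmt19_w η hη0 c v v' v'' hv' hode s hs1
    have hg2 : HasDerivAt (fun t => (w t) ^ 2) (2 * w s * (s ^ 2 * (c s * v s))) s := by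
      have := hwd.pow 2
      norm_num at this
      have h' : HasDerivAt (fun t => (t ^ 2 * v' t) ^ 2) _ s := this
      simpa [hw, mul_assoc] using h'
    have hgd : HasDerivAt g (2 * v s * v' s + 2 * w s * (s ^ 2 * (c s * v s))) s :=
      hg1.add hg2
    have hexp : HasDerivAt (fun t : ℝ => Real.exp (K * t)) (Real.exp (K * s) * K) s := by
      have h1 : HasDerivAt (fun t : ℝ => K * t) K s := by
        simpa using (hasDerivAt_id s).const_mul K
      exact h1.exp
    exact hgd.mul hexp
  have hFcont : ContinuousOn F (Set.Icc a' a) := by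
    apply ContinuousOn.mul
    · exact ((hvc.mono hIccsub).pow 2).add
        (((continuous_pow 2).continuousOn.mul (hv'cont.mono hIccsub)).pow 2)
    · exact (Real.continuous_exp.comp (continuous_const.mul continuous_id)).continuousOn
  have hnonneg : ∀ s ∈ Set.Ioo a' a, 0 ≤
      (2 * v s * v' s + 2 * w s * (s ^ 2 * (c s * v s))) * Real.exp (K * s)
        + g s * (Real.exp (K * s) * K) := by
    intro s hs
    have hs1 : s ∈ Set.Ioo η 1 := hIoosub hs
    have hsI : s ∈ Set.Icc η 1 := Set.Ioo_subset_Icc_self hs1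
    have hs0 : 0 < s := lt_trans ha'0 hs.1
    have hcs0 : 0 ≤ c s := hcnonneg s hsI
    have hcsC : c s ≤ C := hcle s hsI
    have hs'le : a' ≤ s := hs.1.le
    have hsle1 : s ≤ 1 := hs1.2.le
    have hbr : 0 ≤ 2 * v s * v' s + 2 * w s * (s ^ 2 * (c s * v s))
        + K * ((v s) ^ 2 + (w s) ^ 2) := by
      have := stmt19_bracket s a' C K (v s) (v' s) (c s) ha'0 hs'le hsle1 hcs0 hcsC hK
      simpa [hw] using this
    have hE0 : 0 < Real.exp (K * s) := Real.exp_pos _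
    have hfact : (2 * v s * v' s + 2 * w s * (s ^ 2 * (c s * v s))) * Real.exp (K * s)
        + g s * (Real.exp (K * s) * K)
        = Real.exp (K * s) * (2 * v s * v' s + 2 * w s * (s ^ 2 * (c s * v s))
            + K * ((v s) ^ 2 + (w s) ^ 2)) := by
      simp only [hg]; ring
    rw [hfact]
    exact mul_nonneg hE0.le hbr
  have hmono : MonotoneOn F (Set.Icc a' a) := by
    apply monotoneOn_of_deriv_nonneg (convex_Icc a' a) hFcont
    · rw [interior_Icc]
      exact fun s hs => ((hFderiv s hs).differentiableAt).differentiableWithinAt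
    · rw [interior_Icc]
      intro s hs
      rw [(hFderiv s hs).deriv]
      exact hnonneg s hs
  have hFa : F a = 0 := by
    simp only [hF, hg, hw, hva, hv'a]
    ring
  have hFa' : F a' ≤ 0 := by
    have := hmono ⟨le_rfl, ha'a.le⟩ ⟨ha'a.le, le_rfl⟩ ha'a.le
    rwa [hFa] at this
  have hva' : 0 < v a' := hlt a' ⟨ha'η.le, ha'a⟩
  have hga' : 0 < g a' := by
    have h1 : 0 < (v a') ^ 2 := by positivity
    have h2 : 0 ≤ (w a') ^ 2 := sq_nonneg _
    simp only [hg]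
    linarith
  have : 0 < F a' := mul_pos hga' (Real.exp_pos _)
  linarith
end
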